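/- arXiv:2508.19147 — 7 statements merged into one kernel-verified Lean document; each statement's English description precedes it below -/
import Mathlib

section
/- For every pair of functions G₁, G₂ : Finset α → ℂ and every finite set γ ⊆ α, the K-transform is multiplicative with respect to the ⋆-convolution: (K(G₁ ⋆ G₂))(γ) = (K G₁)(γ) · (K G₂)(γ). -/
open Finset

/-- The K-transform: `(K G)(γ) = ∑_{η ⊆ γ} G(η)`. -/
noncomputable def Ktransform {α : Type*} [DecidableEq α] (G : Finset α → ℂ) (γ : Finset α) : ℂ :=
  ∑ η ∈ γ.powerset, G η

/-- The ⋆-convolution: `(G₁ ⋆ G₂)(η) = ∑_{η₁ ∪ η₂ = η} G₁(η₁) G₂(η₂)`,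
the sum over ordered pairs of subsets of `η` whose union is `η`. -/
noncomputable def starConv {α : Type*} [DecidableEq α] (G₁ G₂ : Finset α → ℂ) (η : Finset α) : ℂ :=
  ∑ p ∈ (η.powerset ×ˢ η.powerset).filter (fun p => p.1 ∪ p.2 = η), G₁ p.1 * G₂ p.2

/-- The K-transform is multiplicative with respect to the ⋆-convolution. -/
theorem Ktransform_starConv {α : Type*} [DecidableEq α] (G₁ G₂ : Finset α → ℂ)
    (γ : Finset α) :
    Ktransform (starConv G₁ G₂) γ = Ktransform G₁ γ * Ktransform G₂ γ := by
  unfold Ktransform starConv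
  rw [Finset.sum_mul_sum]
  rw [← Finset.sum_product']
  rw [← Finset.sum_fiberwise_of_maps_to (g := fun p : Finset α × Finset α => p.1 ∪ p.2)
      (t := γ.powerset) (fun p hp => by
        simp only [mem_product, mem_powerset] at hp ⊢
        exact union_subset hp.1 hp.2)]
  refine Finset.sum_congr rfl fun η hη => ?_
  simp only [mem_powerset] at hη
  refine Finset.sum_congr ?_ fun p _ => rfl
  ext p
  simp only [mem_filter, mem_product, mem_powerset]
  constructor
  · rintro ⟨_, rfl⟩
    exact ⟨⟨(subset_union_left).trans hη, (subset_union_right).trans hη⟩, rfl⟩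
  · rintro ⟨_, rfl⟩
    exact ⟨⟨subset_union_left, subset_union_right⟩, rfl⟩
end

section
/- For every G : Finset α → ℂ one has Σ_{η ∈ Finset α} (G ⋆ Ḡ)(η)·θ(η) = Σ_{γ ∈ Finset α} μ(γ)·|(K G)(γ)|², where Ḡ denotes the pointwise complex conjugate of G; in particular this quantity is a nonnegative real number, i.e. the correlation function θ of any point process is ⋆-positive definite. -/
open Finset
open scoped ComplexConjugate

/-- The correlation function `θ` of any point process `μ` is ⋆-positive definite:
`∑_η (G ⋆ Ḡ)(η) θ(η) = ∑_γ μ(γ) |(K G)(γ)|²`, a nonnegative real number. -/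
theorem starConv_positive_definite {α : Type*} [Fintype α] [DecidableEq α]
    (μ : Finset α → ℝ) (hμpos : ∀ γ, 0 ≤ μ γ) (hμsum : ∑ γ : Finset α, μ γ = 1)
    (θ : Finset α → ℝ)
    (hθ : ∀ η, θ η = ∑ γ ∈ univ.filter (fun γ => η ⊆ γ), μ γ)
    (G : Finset α → ℂ) :
    (∑ η : Finset α, starConv G (fun ζ => conj (G ζ)) η * (θ η : ℂ))
      = ∑ γ : Finset α, (μ γ : ℂ) * ((‖Ktransform G γ‖ ^ 2 : ℝ) : ℂ)
    ∧ 0 ≤ ∑ γ : Finset α, μ γ * ‖Ktransform G γ‖ ^ 2 := by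
  have main : (∑ η : Finset α, starConv G (fun ζ => conj (G ζ)) η * (θ η : ℂ))
      = ∑ γ : Finset α, (μ γ : ℂ) * ((‖Ktransform G γ‖ ^ 2 : ℝ) : ℂ) := by
    have step1 : (∑ η : Finset α, starConv G (fun ζ => conj (G ζ)) η * (θ η : ℂ))
        = ∑ p ∈ (univ ×ˢ univ : Finset (Finset α × Finset α)),
            G p.1 * conj (G p.2) * (θ (p.1 ∪ p.2) : ℂ) := by
      have hfil : ∀ η : Finset α,
          (η.powerset ×ˢ η.powerset).filter (fun p => p.1 ∪ p.2 = η)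
            = (univ ×ˢ univ : Finset (Finset α × Finset α)).filter
                (fun p => p.1 ∪ p.2 = η) := by
        intro η
        ext p
        simp only [mem_filter, mem_product, mem_powerset, mem_univ, true_and]
        constructor
        · rintro ⟨_, h⟩; exact h
        · intro h
          exact ⟨⟨h ▸ subset_union_left, h ▸ subset_union_right⟩, h⟩
      simp only [starConv, hfil, sum_mul, sum_filter]
      rw [Finset.sum_comm]
      refine Finset.sum_congr rfl fun p _ => ?_
      simp [ite_mul, mul_assoc]
    rw [step1]
    have step2 : ∀ p : Finset α × Finset α,
        G p.1 * conj (G p.2) * (θ (p.1 ∪ p.2) : ℂ)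
          = ∑ γ : Finset α, if p.1 ⊆ γ ∧ p.2 ⊆ γ then G p.1 * conj (G p.2) * (μ γ : ℂ)
              else 0 := by
      intro p
      rw [hθ, ← Finset.sum_filter]
      push_cast
      rw [Finset.mul_sum]
      refine (Finset.sum_congr ?_ fun _ _ => rfl)
      ext γ
      simp [Finset.union_subset_iff]
    simp only [step2]
    rw [Finset.sum_comm]
    refine Finset.sum_congr rfl fun γ _ => ?_
    have habs : ((‖Ktransform G γ‖ ^ 2 : ℝ) : ℂ)
        = Ktransform G γ * conj (Ktransform G γ) := by
      rw [Complex.sq_norm, Complex.mul_conj]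
    rw [habs, Ktransform, ← Finset.sum_filter]
    have hset : (univ ×ˢ univ : Finset (Finset α × Finset α)).filter
        (fun x => x.1 ⊆ γ ∧ x.2 ⊆ γ) = γ.powerset ×ˢ γ.powerset := by
      ext x; simp [Finset.mem_powerset]
    rw [hset, Finset.sum_product, map_sum, Finset.sum_mul_sum, Finset.mul_sum]
    refine Finset.sum_congr rfl fun η₁ _ => ?_
    rw [Finset.mul_sum]
    exact Finset.sum_congr rfl fun η₂ _ => by ring
  refine ⟨main, Finset.sum_nonneg fun γ _ => mul_nonneg (hμpos γ) (sq_nonneg _)⟩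
end

section
/- The spatial falling factorial counts satisfy the recurrence: N₁(Δ) = |S ∩ Δ| for every Δ, and for every n ≥ 1 and Δ₁, …, Δ_{n+1}, N_{n+1}(Δ₁, …, Δ_{n+1}) = |S ∩ Δ_{n+1}| · N_n(Δ₁, …, Δ_n) − Σ_{i=1}^{n} N_n(Δ₁, …, Δ_{i−1}, Δ_i ∩ Δ_{n+1}, Δ_{i+1}, …, Δ_n), the identity holding in ℤ. -/
open Finset

/-- `fallingFactorialCount S n Δ` is the number of injective tuples
`(x₁, …, x_n) ∈ Sⁿ` with `x_i ∈ Δ_i` for every `i`; this is the mass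
`(γ)_n(Δ₁ × ⋯ × Δ_n)` of the spatial falling factorial of the configuration
`γ = ∑_{x ∈ S} δ_x`. -/
def fallingFactorialCount {α : Type*} [DecidableEq α] (S : Finset α)
    (n : ℕ) (Δ : Fin n → Finset α) : ℤ :=
  Fintype.card {f : Fin n → {x // x ∈ S} // Function.Injective f ∧ ∀ i, (f i : α) ∈ Δ i}

section Aux

open Function

variable {α : Type*} [DecidableEq α]

/-- The finset of injective tuples counted by `fallingFactorialCount`. -/
private def ffcSet (S : Finset α) (n : ℕ) (Δ : Fin n → Finset α) :
    Finset (Fin n → {x // x ∈ S}) :=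
  Finset.univ.filter fun f => Function.Injective f ∧ ∀ i, (f i : α) ∈ Δ i

private lemma ffc_eq (S : Finset α) (n : ℕ) (Δ : Fin n → Finset α) :
    fallingFactorialCount S n Δ = ((ffcSet S n Δ).card : ℤ) := by
  unfold fallingFactorialCount ffcSet
  rw [Fintype.card_subtype]

private lemma injective_iff_aux {β : Type*} {n : ℕ} (f : Fin (n + 1) → β) :
    Injective f ↔ Injective (f ∘ Fin.castSucc) ∧
      ∀ i : Fin n, f (Fin.last n) ≠ f i.castSucc := by
  constructor
  · intro h
    refine ⟨h.comp (Fin.castSucc_injective n), fun i hi => ?_⟩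
    exact absurd (h hi).symm (Fin.castSucc_lt_last i).ne
  · rintro ⟨h1, h2⟩ a b hab
    induction a using Fin.lastCases with
    | last =>
      induction b using Fin.lastCases with
      | last => rfl
      | cast b => exact absurd hab (h2 b)
    | cast a =>
      induction b using Fin.lastCases with
      | last => exact absurd hab.symm (h2 a)
      | cast b => exact congrArg Fin.castSucc (h1 hab)

end Aux

/-- The spatial falling factorial counts satisfy the recurrence
`N₁(Δ) = |S ∩ Δ|` and
`N_{n+1}(Δ₁,…,Δ_{n+1}) = |S ∩ Δ_{n+1}| ⬝ N_n(Δ₁,…,Δ_n)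
  − ∑_{i=1}^n N_n(Δ₁,…,Δ_{i−1}, Δ_i ∩ Δ_{n+1}, Δ_{i+1},…,Δ_n)` in `ℤ`. -/
theorem fallingFactorialCount_recurrence {α : Type*} [DecidableEq α] (S : Finset α) :
    (∀ Δ : Finset α, fallingFactorialCount S 1 (fun _ => Δ) = ((S ∩ Δ).card : ℤ)) ∧
    (∀ n : ℕ, 1 ≤ n → ∀ Δ : Fin (n + 1) → Finset α,
      fallingFactorialCount S (n + 1) Δ
        = ((S ∩ Δ (Fin.last n)).card : ℤ)
            * fallingFactorialCount S n (fun i => Δ i.castSucc)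
          - ∑ i : Fin n, fallingFactorialCount S n
              (Function.update (fun j : Fin n => Δ j.castSucc) i
                (Δ i.castSucc ∩ Δ (Fin.last n)))) := by
  constructor
  · -- base case `n = 1`
    intro Δ
    rw [ffc_eq]
    congr 1
    refine Finset.card_nbij (fun f => (f 0 : α)) ?_ ?_ ?_
    · rintro f hf
      simp only [Finset.mem_coe, ffcSet, Finset.mem_filter, Finset.mem_univ, true_and] at hf
      exact Finset.mem_coe.2 (Finset.mem_inter.2 ⟨(f 0).2, hf.2 0⟩)
    · rintro f hf g hg hfg
      simp only [Set.mem_setOf_eq] at hfg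
      funext i
      have : i = 0 := Subsingleton.elim i 0
      subst this
      exact Subtype.ext hfg
    · rintro x hx
      rw [Finset.mem_coe, Finset.mem_inter] at hx
      refine ⟨fun _ => ⟨x, hx.1⟩, ?_, rfl⟩
      simp only [Finset.mem_coe, ffcSet, Finset.mem_filter, Finset.mem_univ, true_and]
      exact ⟨Function.injective_of_subsingleton _, fun _ => hx.2⟩
  · -- recurrence
    intro n _ Δ
    classical
    simp only [ffc_eq]
    -- the "ambient" set: injective prefixes with arbitrary admissible last entry
    set A : Finset (Fin (n + 1) → {x // x ∈ S}) :=
      Finset.univ.filter fun f =>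
        Function.Injective (f ∘ Fin.castSucc) ∧
          (∀ i : Fin n, (f i.castSucc : α) ∈ Δ i.castSucc) ∧
          (f (Fin.last n) : α) ∈ Δ (Fin.last n) with hA
    have hAcard : A.card
        = (S ∩ Δ (Fin.last n)).card * (ffcSet S n (fun i => Δ i.castSucc)).card := by
      have hScard : (Finset.univ.filter
            fun x : {x // x ∈ S} => (x : α) ∈ Δ (Fin.last n)).card
          = (S ∩ Δ (Fin.last n)).card := by
        refine Finset.card_nbij (fun x => (x : α)) ?_ ?_ ?_
        · rintro x hx
          simp only [Finset.mem_coe, Finset.mem_filter, Finset.mem_univ, true_and] at hx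
          exact Finset.mem_coe.2 (Finset.mem_inter.2 ⟨x.2, hx⟩)
        · rintro x _ y _ hxy
          exact Subtype.ext hxy
        · rintro x hx
          rw [Finset.mem_coe, Finset.mem_inter] at hx
          refine ⟨⟨x, hx.1⟩, ?_, rfl⟩
          simp [hx.2]
      rw [← hScard, ← Finset.card_product]
      refine Finset.card_nbij' (fun f => (f (Fin.last n), f ∘ Fin.castSucc))
        (fun p => Fin.snoc p.2 p.1) ?_ ?_ ?_ ?_
      · rintro f hf
        simp only [Finset.mem_coe, hA, Finset.mem_filter, Finset.mem_univ,
          true_and] at hf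
        simp only [Finset.mem_coe, Finset.mem_product, Finset.mem_filter,
          Finset.mem_univ, true_and, ffcSet]
        exact ⟨hf.2.2, hf.1, hf.2.1⟩
      · rintro ⟨x, g⟩ hp
        simp only [Finset.mem_coe, Finset.mem_product, Finset.mem_filter,
          Finset.mem_univ, true_and, ffcSet] at hp
        simp only [Finset.mem_coe, hA, Finset.mem_filter, Finset.mem_univ, true_and]
        refine ⟨?_, ?_, ?_⟩
        · have : (Fin.snoc g x : Fin (n + 1) → {x // x ∈ S}) ∘ Fin.castSucc = g := by
            funext i; simp
          rw [this]; exact hp.2.1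
        · intro i; simp [hp.2.2 i]
        · simp [hp.1]
      · rintro f hf
        funext i
        induction i using Fin.lastCases with
        | last => simp
        | cast i => simp
      · rintro ⟨x, g⟩ hp
        simp only [Prod.mk.injEq]
        constructor
        · simp
        · funext i; simp
    -- decompose `A` into injective tuples and the "bad" tuples
    have hsplit : A.card = (ffcSet S (n + 1) Δ).card
        + ∑ i : Fin n, (ffcSet S n
            (Function.update (fun j : Fin n => Δ j.castSucc) i
              (Δ i.castSucc ∩ Δ (Fin.last n)))).card := by
      have h1 : ffcSet S (n + 1) Δ = A.filter fun f => Function.Injective f := by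
        ext f
        simp only [ffcSet, hA, Finset.mem_filter, Finset.mem_univ, true_and]
        constructor
        · rintro ⟨hinj, hmem⟩
          exact ⟨⟨((injective_iff_aux f).1 hinj).1, fun i => hmem i.castSucc,
            hmem (Fin.last n)⟩, hinj⟩
        · rintro ⟨⟨h1, h2, h3⟩, hinj⟩
          refine ⟨hinj, fun i => ?_⟩
          induction i using Fin.lastCases with
          | last => exact h3
          | cast i => exact h2 i
      have h2 : (A.filter fun f => ¬ Function.Injective f)
          = Finset.univ.biUnion (fun i : Fin n =>
              A.filter fun f => f (Fin.last n) = f i.castSucc) := by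
        ext f
        simp only [Finset.mem_biUnion, Finset.mem_univ, true_and, Finset.mem_filter]
        constructor
        · rintro ⟨hfA, hninj⟩
          rw [injective_iff_aux] at hninj
          push_neg at hninj
          have hprefix : Function.Injective (f ∘ Fin.castSucc) := by
            simp only [hA, Finset.mem_filter, Finset.mem_univ, true_and] at hfA
            exact hfA.1
          obtain ⟨i, hi⟩ := hninj hprefix
          exact ⟨i, hfA, hi⟩
        · rintro ⟨i, hfA, hi⟩
          refine ⟨hfA, fun hinj => ?_⟩
          exact absurd (((injective_iff_aux f).1 hinj).2 i) (by simpa using hi)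
      have h3 : ∀ i : Fin n,
          (A.filter fun f => f (Fin.last n) = f i.castSucc).card
            = (ffcSet S n (Function.update (fun j : Fin n => Δ j.castSucc) i
                (Δ i.castSucc ∩ Δ (Fin.last n)))).card := by
        intro i
        refine Finset.card_nbij' (fun f => f ∘ Fin.castSucc)
          (fun g => Fin.snoc g (g i)) ?_ ?_ ?_ ?_
        · rintro f hf
          simp only [Finset.mem_coe, Finset.mem_filter, hA, Finset.mem_univ,
            true_and] at hf
          obtain ⟨⟨hinj, hmem, hlast⟩, heq⟩ := hf
          simp only [Finset.mem_coe, ffcSet, Finset.mem_filter, Finset.mem_univ, true_and]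
          refine ⟨hinj, fun j => ?_⟩
          rcases eq_or_ne j i with rfl | hj
          · simp only [Function.update_self, Function.comp_apply]
            exact Finset.mem_inter.2 ⟨hmem j, heq ▸ hlast⟩
          · simpa [Function.update_of_ne hj] using hmem j
        · rintro g hg
          simp only [Finset.mem_coe, ffcSet, Finset.mem_filter, Finset.mem_univ,
            true_and] at hg
          obtain ⟨hinj, hmem⟩ := hg
          have hgi := hmem i
          simp only [Function.update_self] at hgi
          rw [Finset.mem_inter] at hgi
          simp only [Finset.mem_coe, Finset.mem_filter, hA, Finset.mem_univ, true_and]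
          refine ⟨⟨?_, fun j => ?_, ?_⟩, ?_⟩
          · have : (Fin.snoc g (g i) : Fin (n + 1) → {x // x ∈ S}) ∘ Fin.castSucc
                = g := by funext j; simp
            rw [this]; exact hinj
          · rcases eq_or_ne j i with rfl | hj
            · simpa using hgi.1
            · have := hmem j
              simpa [Function.update_of_ne hj] using this
          · simpa using hgi.2
          · simp
        · rintro f hf
          simp only [Finset.mem_coe, Finset.mem_filter, hA, Finset.mem_univ,
            true_and] at hf
          funext j
          induction j using Fin.lastCases with
          | last => simpa using hf.2.symm
          | cast j => simp
        · rintro g _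
          funext j; simp
      have hdisj : (↑(Finset.univ : Finset (Fin n)) : Set (Fin n)).PairwiseDisjoint
          (fun i : Fin n => A.filter fun f => f (Fin.last n) = f i.castSucc) := by
        rintro i - j - hij
        refine Finset.disjoint_left.2 fun f hfi hfj => ?_
        simp only [Finset.mem_filter, hA, Finset.mem_univ, true_and] at hfi hfj
        exact hij (hfi.1.1 (hfi.2.symm.trans hfj.2))
      rw [← Finset.card_filter_add_card_filter_not
        (s := A) (p := fun f => Function.Injective f), h1, h2,
        Finset.card_biUnion hdisj]
      congr 1
      exact Finset.sum_congr rfl fun i _ => h3 i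
    rw [eq_sub_iff_add_eq]
    exact_mod_cast hsplit.symm.trans hAcard
end

section
/- If the family (a⁺(φ))_{φ ∈ H} satisfies the CAR and Ω ∈ F is a unit vector, then there exists a bounded self-adjoint operator K on H with 0 ≤ K ≤ 1 such that ⟨a⁺(φ)a⁻(ψ)Ω, Ω⟩ = (Kφ, ψ)_H for all φ, ψ ∈ H. -/
open ContinuousLinearMap

/-- If `(a⁺(φ))_{φ ∈ H}` satisfies the CAR and `Ω` is a unit vector, then there exists a
bounded self-adjoint operator `K` on `H` with `0 ≤ K ≤ 1` (i.e. `(Kφ, φ)_H` is real and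
`0 ≤ (Kφ, φ)_H ≤ ‖φ‖²` for all `φ`) such that `⟨a⁺(φ)a⁻(ψ)Ω, Ω⟩ = (Kφ, ψ)_H`
for all `φ, ψ ∈ H`.  Here the inner products `⟨x, y⟩` and `(x, y)_H` are linear in the
first argument, hence equal to Mathlib's `⟪y, x⟫`. -/
theorem car_covariance_operator {H F : Type*}
    [NormedAddCommGroup H] [InnerProductSpace ℂ H] [CompleteSpace H]
    [NormedAddCommGroup F] [InnerProductSpace ℂ F] [CompleteSpace F] [Nontrivial F]
    (a : H →ₗ[ℂ] (F →L[ℂ] F))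
    (hCAR₁ : ∀ φ ψ : H, a φ * a ψ + a ψ * a φ = 0)
    (hCAR₂ : ∀ φ ψ : H, adjoint (a φ) * adjoint (a ψ) + adjoint (a ψ) * adjoint (a φ) = 0)
    (hCAR₃ : ∀ φ ψ : H,
      adjoint (a φ) * a ψ + a ψ * adjoint (a φ) = (inner ℂ φ ψ : ℂ) • (1 : F →L[ℂ] F))
    (Ω : F) (hΩ : ‖Ω‖ = 1) :
    ∃ K : H →L[ℂ] H, IsSelfAdjoint K
      ∧ (∀ φ : H, (inner ℂ φ (K φ) : ℂ).im = 0
          ∧ 0 ≤ (inner ℂ φ (K φ) : ℂ).re ∧ (inner ℂ φ (K φ) : ℂ).re ≤ ‖φ‖ ^ 2)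
      ∧ (∀ φ ψ : H,
          (inner ℂ Ω ((a φ * adjoint (a ψ)) Ω) : ℂ) = (inner ℂ ψ (K φ) : ℂ)) := by
  classical
  -- b φ := a⁻(φ)Ω
  set b : H → F := fun φ => adjoint (a φ) Ω with hbdef
  -- norm bound on the adjoint
  have hbound : ∀ (φ : H) (x : F), ‖adjoint (a φ) x‖ ^ 2 ≤ ‖φ‖ ^ 2 * ‖x‖ ^ 2 := by
    intro φ x
    have h := congrArg (fun T : F →L[ℂ] F => (inner ℂ x (T x) : ℂ)) (hCAR₃ φ φ)
    simp only [ContinuousLinearMap.add_apply, ContinuousLinearMap.mul_apply,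
      ContinuousLinearMap.smul_apply, ContinuousLinearMap.one_apply, inner_add_right,
      inner_smul_right] at h
    have e1 : (inner ℂ x ((adjoint (a φ)) ((a φ) x)) : ℂ) = inner ℂ ((a φ) x) ((a φ) x) :=
      adjoint_inner_right _ _ _
    have e2 : (inner ℂ x ((a φ) ((adjoint (a φ)) x)) : ℂ)
        = inner ℂ ((adjoint (a φ)) x) ((adjoint (a φ)) x) := by
      rw [← adjoint_inner_left]
    rw [e1, e2, inner_self_eq_norm_sq_to_K, inner_self_eq_norm_sq_to_K,
      inner_self_eq_norm_sq_to_K, inner_self_eq_norm_sq_to_K] at h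
    have h' : ‖(a φ) x‖ ^ 2 + ‖(adjoint (a φ)) x‖ ^ 2 = ‖φ‖ ^ 2 * ‖x‖ ^ 2 := by
      exact_mod_cast h
    nlinarith [sq_nonneg ‖(a φ) x‖]
  have hbΩ : ∀ φ : H, ‖b φ‖ ≤ ‖φ‖ := by
    intro φ
    have h := hbound φ Ω
    rw [hΩ] at h
    nlinarith [norm_nonneg (b φ), norm_nonneg φ]
  -- the functional L φ : ψ ↦ ⟪b ψ, b φ⟫
  have map_b_add : ∀ ψ ψ' : H, b (ψ + ψ') = b ψ + b ψ' := by
    intro ψ ψ'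
    simp only [hbdef, map_add, ContinuousLinearMap.add_apply]
  have adj_smul : ∀ (c : ℂ) (T : F →L[ℂ] F), adjoint (c • T) = (starRingEnd ℂ) c • adjoint T :=
    fun c T => map_smulₛₗ
      (ContinuousLinearMap.adjoint : (F →L[ℂ] F) ≃ₗᵢ⋆[ℂ] (F →L[ℂ] F)).toLinearEquiv c T
  have map_b_smul : ∀ (c : ℂ) (ψ : H), b (c • ψ) = (starRingEnd ℂ) c • b ψ := by
    intro c ψ
    simp only [hbdef, map_smul, adj_smul, ContinuousLinearMap.smul_apply]
  let L : H → (H →L[ℂ] ℂ) := fun φ =>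
    LinearMap.mkContinuous
      { toFun := fun ψ => (inner ℂ (b ψ) (b φ) : ℂ)
        map_add' := by intro ψ ψ'; simp only [map_b_add, inner_add_left]
        map_smul' := by
          intro c ψ
          simp only [map_b_smul, inner_smul_left, RingHom.id_apply, smul_eq_mul,
            RingHomCompTriple.comp_apply, starRingEnd_self_apply] }
      ‖φ‖
      (by
        intro ψ
        calc ‖(inner ℂ (b ψ) (b φ) : ℂ)‖ ≤ ‖b ψ‖ * ‖b φ‖ := norm_inner_le_norm _ _
        _ ≤ ‖ψ‖ * ‖φ‖ := by
            exact mul_le_mul (hbΩ ψ) (hbΩ φ) (norm_nonneg _) (norm_nonneg _)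
        _ = ‖φ‖ * ‖ψ‖ := mul_comm _ _)
  have hLapp : ∀ φ ψ : H, L φ ψ = (inner ℂ (b ψ) (b φ) : ℂ) := fun _ _ => rfl
  have hLadd : ∀ φ φ' : H, L (φ + φ') = L φ + L φ' := by
    intro φ φ'
    ext ψ
    simp only [hLapp, ContinuousLinearMap.add_apply, map_b_add, inner_add_right]
  have hLsmul : ∀ (c : ℂ) (φ : H), L (c • φ) = (starRingEnd ℂ) c • L φ := by
    intro c φ
    ext ψ
    simp only [hLapp, ContinuousLinearMap.smul_apply, map_b_smul, inner_smul_right,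
      smul_eq_mul]
  -- the (unbounded-typed) operator K₀ via Riesz representation
  let K0 : H →ₗ[ℂ] H :=
    { toFun := fun φ => (InnerProductSpace.toDual ℂ H).symm (L φ)
      map_add' := by intro φ φ'; simp only [hLadd, map_add]
      map_smul' := by
        intro c φ
        simp only [hLsmul, RingHom.id_apply]
        rw [LinearIsometryEquiv.map_smulₛₗ]
        simp }
  have hK0 : ∀ φ ψ : H, (inner ℂ ψ (K0 φ) : ℂ) = inner ℂ (b φ) (b ψ) := by
    intro φ ψ
    have h : (inner ℂ (K0 φ) ψ : ℂ) = L φ ψ := InnerProductSpace.toDual_symm_apply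
    rw [hLapp] at h
    calc (inner ℂ ψ (K0 φ) : ℂ) = (starRingEnd ℂ) (inner ℂ (K0 φ) ψ : ℂ) :=
          (inner_conj_symm _ _).symm
    _ = (starRingEnd ℂ) (inner ℂ (b ψ) (b φ) : ℂ) := by rw [h]
    _ = inner ℂ (b φ) (b ψ) := inner_conj_symm _ _
  have hK0norm : ∀ φ : H, ‖K0 φ‖ ≤ 1 * ‖φ‖ := by
    intro φ
    rw [one_mul]
    show ‖(InnerProductSpace.toDual ℂ H).symm (L φ)‖ ≤ ‖φ‖
    rw [LinearIsometryEquiv.norm_map]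
    exact LinearMap.mkContinuous_norm_le _ (norm_nonneg _) _
  refine ⟨K0.mkContinuous 1 hK0norm, ?_, ?_, ?_⟩
  · rw [ContinuousLinearMap.isSelfAdjoint_iff']
    ext φ
    apply ext_inner_left ℂ
    intro ψ
    rw [adjoint_inner_right]
    show (inner ℂ ((K0.mkContinuous 1 hK0norm) ψ) φ : ℂ) = inner ℂ ψ (K0 φ)
    have h1 : ((K0.mkContinuous 1 hK0norm) ψ) = K0 ψ := rfl
    rw [h1, hK0, ← inner_conj_symm, hK0, inner_conj_symm]
  · intro φ
    have h : (inner ℂ φ ((K0.mkContinuous 1 hK0norm) φ) : ℂ) = inner ℂ (b φ) (b φ) := hK0 φ φ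
    rw [h, inner_self_eq_norm_sq_to_K, ← RCLike.ofReal_pow]
    refine ⟨Complex.ofReal_im _, Complex.ofReal_re _ ▸ sq_nonneg ‖b φ‖, ?_⟩
    exact (by nlinarith [hbΩ φ, norm_nonneg (b φ), norm_nonneg φ] :
      ‖b φ‖ ^ 2 ≤ ‖φ‖ ^ 2)
  · intro φ ψ
    have h1 : (inner ℂ Ω ((a φ * adjoint (a ψ)) Ω) : ℂ) = inner ℂ (b φ) (b ψ) := by
      rw [ContinuousLinearMap.mul_apply, ← adjoint_inner_left]
    rw [h1, ← hK0 φ ψ]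
    rfl
end

section
/- The Wick polynomials are symmetric in their arguments: for every n ≥ 1, every Δ : Fin n → Set X, and every permutation π of Fin n, one has W_n(Δ_{π(1)}, …, Δ_{π(n)}) = W_n(Δ₁, …, Δ_n). -/
open Finset

section WickAux

variable {R : Type*} [Ring R] {X : Type*}
  {ρ : Set X → R} {W : (n : ℕ) → (Fin (n + 1) → Set X) → R}

/-- Restriction of a permutation of `Fin (n+2)` fixing `last` to a permutation of
`Fin (n+1)` via `castSucc`. -/
def wickRestrict {n : ℕ} (π : Equiv.Perm (Fin (n + 2)))
    (hπ : π (Fin.last (n + 1)) = Fin.last (n + 1)) : Equiv.Perm (Fin (n + 1)) where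
  toFun i := (π i.castSucc).castPred (fun h =>
    (Fin.castSucc_lt_last i).ne (π.injective (h.trans hπ.symm)))
  invFun i := (π⁻¹ i.castSucc).castPred (fun h => by
    have h2 : i.castSucc = Fin.last (n + 1) := by
      have := congrArg π h
      rwa [Equiv.Perm.coe_inv, Equiv.apply_symm_apply, hπ] at this
    exact (Fin.castSucc_lt_last i).ne h2)
  left_inv i := by
    apply Fin.castSucc_injective
    simp [Fin.castSucc_castPred]
  right_inv i := by
    apply Fin.castSucc_injective
    simp [Fin.castSucc_castPred]

lemma wickRestrict_castSucc {n : ℕ} (π : Equiv.Perm (Fin (n + 2)))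
    (hπ : π (Fin.last (n + 1)) = Fin.last (n + 1)) (i : Fin (n + 1)) :
    (wickRestrict π hπ i).castSucc = π i.castSucc := by
  simp [wickRestrict]

/-- Invariance of Wick polynomials under a permutation fixing the last index,
given symmetry one level down. -/
lemma wick_fixlast
    (hWrec : ∀ (n : ℕ) (Δ : Fin (n + 2) → Set X),
      W (n + 1) Δ = ρ (Δ (Fin.last (n + 1))) * W n (fun i => Δ i.castSucc)
        - ∑ i : Fin (n + 1), W n
            (Function.update (fun j : Fin (n + 1) => Δ j.castSucc) i
              (Δ i.castSucc ∩ Δ (Fin.last (n + 1)))))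
    (n : ℕ)
    (IH : ∀ (Δ : Fin (n + 1) → Set X) (σ : Equiv.Perm (Fin (n + 1))),
      W n (fun i => Δ (σ i)) = W n Δ)
    (Δ : Fin (n + 2) → Set X) (π : Equiv.Perm (Fin (n + 2)))
    (hπ : π (Fin.last (n + 1)) = Fin.last (n + 1)) :
    W (n + 1) (fun i => Δ (π i)) = W (n + 1) Δ := by
  set σ := wickRestrict π hπ with hσ
  have hcs : ∀ i : Fin (n + 1), π i.castSucc = (σ i).castSucc :=
    fun i => (wickRestrict_castSucc π hπ i).symm
  set g : Fin (n + 1) → Set X := fun j => Δ j.castSucc with hg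
  set g' : Fin (n + 1) → R := fun k =>
    W n (Function.update g k (Δ k.castSucc ∩ Δ (Fin.last (n + 1)))) with hg'
  rw [hWrec n (fun i => Δ (π i)), hWrec n Δ]
  have h1 : W n (fun i => Δ (π i.castSucc)) = W n g := by
    have : (fun i => Δ (π i.castSucc)) = fun i => g (σ i) := by
      funext i; rw [hcs]
    rw [this, IH]
  have h2 : ∀ i : Fin (n + 1),
      W n (Function.update (fun j : Fin (n + 1) => Δ (π j.castSucc)) i
        (Δ (π i.castSucc) ∩ Δ (Fin.last (n + 1)))) = g' (σ i) := by
    intro i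
    have hfeq : (fun j : Fin (n + 1) => Δ (π j.castSucc)) = g ∘ σ := by
      funext j; simp [hcs, hg]
    rw [hcs i, hfeq,
      show Function.update (g ∘ ⇑σ) i (Δ (σ i).castSucc ∩ Δ (Fin.last (n + 1)))
          = Function.update g (σ i) (Δ (σ i).castSucc ∩ Δ (Fin.last (n + 1))) ∘ ⇑σ
        from (Function.update_comp_eq_of_injective g σ.injective i _).symm]
    exact IH _ σ
  simp only [hπ, h1, h2]
  rw [Equiv.sum_comp σ g']

/-- Double expansion of a Wick polynomial in its last two arguments. -/
lemma wick_expand2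
    (hWrec : ∀ (n : ℕ) (Δ : Fin (n + 2) → Set X),
      W (n + 1) Δ = ρ (Δ (Fin.last (n + 1))) * W n (fun i => Δ i.castSucc)
        - ∑ i : Fin (n + 1), W n
            (Function.update (fun j : Fin (n + 1) => Δ j.castSucc) i
              (Δ i.castSucc ∩ Δ (Fin.last (n + 1)))))
    (m : ℕ) (D : Fin (m + 1) → Set X) (A B : Set X) :
    W (m + 2) (Fin.snoc (Fin.snoc D A) B) =
      ρ B * (ρ A * W m D)
      - ρ B * ∑ j, W m (Function.update D j (D j ∩ A))
      - ρ A * ∑ k, W m (Function.update D k (D k ∩ B))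
      + ∑ k, ∑ j, W m (if j = k then Function.update D k (D k ∩ B ∩ A)
          else Function.update (Function.update D k (D k ∩ B)) j (D j ∩ A))
      - ρ (A ∩ B) * W m D
      + ∑ j, W m (Function.update D j (D j ∩ (A ∩ B))) := by
  have hexp : ∀ (E : Fin (m + 1) → Set X) (C : Set X),
      W (m + 1) (Fin.snoc E C) = ρ C * W m E
        - ∑ j, W m (Function.update E j (E j ∩ C)) := by
    intro E C
    rw [hWrec m (Fin.snoc E C)]
    simp [Fin.snoc_last, Fin.snoc_castSucc]
  have hin : ∀ k j : Fin (m + 1),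
      Function.update (Function.update D k (D k ∩ B)) j
        ((Function.update D k (D k ∩ B)) j ∩ A)
      = if j = k then Function.update D k (D k ∩ B ∩ A)
          else Function.update (Function.update D k (D k ∩ B)) j (D j ∩ A) := by
    intro k j
    by_cases h : j = k
    · subst h
      simp [Function.update_self, Function.update_idem]
    · simp [h, Function.update_of_ne h]
  rw [hWrec (m + 1) (Fin.snoc (Fin.snoc D A) B)]
  simp only [Fin.snoc_last, Fin.snoc_castSucc]
  have heta : (fun i : Fin (m + 2) => (Fin.snoc D A : Fin (m + 2) → Set X) i)
      = (Fin.snoc D A : Fin (m + 2) → Set X) := funext fun _ => rfl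
  simp only [heta]
  rw [Fin.sum_univ_castSucc]
  simp only [Fin.snoc_last, Fin.snoc_castSucc, Fin.update_snoc_last, ← Fin.snoc_update]
  simp only [hexp, hin]
  simp only [mul_sub, Finset.mul_sum, Finset.sum_sub_distrib]
  abel

/-- Invariance of Wick polynomials under the swap of the last two arguments. -/
lemma wick_swapPL
    (hcomm : ∀ Δ₁ Δ₂ : Set X, ρ Δ₁ * ρ Δ₂ = ρ Δ₂ * ρ Δ₁)
    (hW₁ : ∀ Δ : Fin 1 → Set X, W 0 Δ = ρ (Δ 0))
    (hWrec : ∀ (n : ℕ) (Δ : Fin (n + 2) → Set X),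
      W (n + 1) Δ = ρ (Δ (Fin.last (n + 1))) * W n (fun i => Δ i.castSucc)
        - ∑ i : Fin (n + 1), W n
            (Function.update (fun j : Fin (n + 1) => Δ j.castSucc) i
              (Δ i.castSucc ∩ Δ (Fin.last (n + 1)))))
    (n : ℕ) (Δ : Fin (n + 2) → Set X) :
    W (n + 1) (fun i => Δ (Equiv.swap ((Fin.last n).castSucc) (Fin.last (n + 1)) i))
      = W (n + 1) Δ := by
  match n with
  | 0 =>
    have hw1 : ∀ E : Fin 2 → Set X, W 1 E = ρ (E 1) * ρ (E 0) - ρ (E 0 ∩ E 1) := by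
      intro E
      rw [hWrec 0 E, Fin.sum_univ_one, hW₁]
      simp only [Function.update_self, hW₁]
      rfl
    have a1 : Equiv.swap ((Fin.last 0).castSucc) (Fin.last 1) (0 : Fin 2) = 1 := by decide
    have a2 : Equiv.swap ((Fin.last 0).castSucc) (Fin.last 1) (1 : Fin 2) = 0 := by decide
    rw [hw1, hw1]
    simp only [a1, a2]
    rw [hcomm, Set.inter_comm]
  | Nat.succ m =>
    set D : Fin (m + 1) → Set X := fun i => Δ i.castSucc.castSucc with hD
    set A : Set X := Δ ((Fin.last (m + 1)).castSucc) with hA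
    set B : Set X := Δ (Fin.last (m + 2)) with hB
    have hΔ : Δ = Fin.snoc (Fin.snoc D A) B := by
      funext x
      refine Fin.lastCases ?_ (fun y => ?_) x
      · rw [Fin.snoc_last]
      · rw [Fin.snoc_castSucc]
        refine Fin.lastCases ?_ (fun z => ?_) y
        · rw [Fin.snoc_last]
        · rw [Fin.snoc_castSucc]
    have hswap : (fun i => Δ (Equiv.swap ((Fin.last (m + 1)).castSucc) (Fin.last (m + 2)) i))
        = Fin.snoc (Fin.snoc D B) A := by
      funext x
      refine Fin.lastCases ?_ (fun y => ?_) x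
      · rw [Equiv.swap_apply_right, Fin.snoc_last]
      · rw [Fin.snoc_castSucc]
        refine Fin.lastCases ?_ (fun z => ?_) y
        · rw [Equiv.swap_apply_left, Fin.snoc_last]
        · rw [Equiv.swap_apply_of_ne_of_ne, Fin.snoc_castSucc]
          · intro h
            exact (Fin.castSucc_lt_last z).ne (Fin.castSucc_injective _ h)
          · exact (Fin.castSucc_lt_last _).ne
    rw [hswap]
    conv_rhs => rw [hΔ]
    rw [wick_expand2 hWrec m D B A, wick_expand2 hWrec m D A B]
    have h1 : ρ A * (ρ B * W m D) = ρ B * (ρ A * W m D) := by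
      rw [← mul_assoc, ← mul_assoc, hcomm]
    have h5 : B ∩ A = A ∩ B := Set.inter_comm B A
    have h4 : (∑ k : Fin (m + 1), ∑ j : Fin (m + 1),
          W m (if j = k then Function.update D k (D k ∩ A ∩ B)
            else Function.update (Function.update D k (D k ∩ A)) j (D j ∩ B)))
        = ∑ k : Fin (m + 1), ∑ j : Fin (m + 1),
          W m (if j = k then Function.update D k (D k ∩ B ∩ A)
            else Function.update (Function.update D k (D k ∩ B)) j (D j ∩ A)) := by
      have hpt : ∀ k j : Fin (m + 1),
          (if j = k then Function.update D k (D k ∩ A ∩ B)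
            else Function.update (Function.update D k (D k ∩ A)) j (D j ∩ B))
          = (if k = j then Function.update D j (D j ∩ B ∩ A)
            else Function.update (Function.update D j (D j ∩ B)) k (D k ∩ A)) := by
        intro k j
        by_cases h : j = k
        · subst h
          simp [Set.inter_right_comm]
        · rw [if_neg h, if_neg (Ne.symm h), Function.update_comm (Ne.symm h)]
      calc (∑ k : Fin (m + 1), ∑ j : Fin (m + 1),
            W m (if j = k then Function.update D k (D k ∩ A ∩ B)
              else Function.update (Function.update D k (D k ∩ A)) j (D j ∩ B)))
          = ∑ k : Fin (m + 1), ∑ j : Fin (m + 1),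
            W m (if k = j then Function.update D j (D j ∩ B ∩ A)
              else Function.update (Function.update D j (D j ∩ B)) k (D k ∩ A)) := by
            exact Finset.sum_congr rfl fun k _ => Finset.sum_congr rfl fun j _ => by
              rw [hpt k j]
        _ = _ := Finset.sum_comm
    rw [h1, h5, h4]
    abel

end WickAux

/-- The Wick polynomials `W_n(Δ₁, …, Δ_n) = :ρ(Δ₁)⋯ρ(Δ_n):` (here `W n` is the Wick
polynomial in `n + 1` arguments), defined by `W₁(Δ) = ρ(Δ)` and the recurrence
`W_{n+1}(Δ₁,…,Δ_{n+1}) = ρ(Δ_{n+1}) W_n(Δ₁,…,Δ_n)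
  − ∑_{i=1}^n W_n(Δ₁,…,Δ_{i−1}, Δ_i ∩ Δ_{n+1}, Δ_{i+1},…,Δ_n)`,
are symmetric in their arguments. -/
theorem wick_polynomials_symmetric {R : Type*} [Ring R] {X : Type*}
    (ρ : Set X → R)
    (hadd : ∀ Δ₁ Δ₂ : Set X, Δ₁ ∩ Δ₂ = ∅ → ρ (Δ₁ ∪ Δ₂) = ρ Δ₁ + ρ Δ₂)
    (hcomm : ∀ Δ₁ Δ₂ : Set X, ρ Δ₁ * ρ Δ₂ = ρ Δ₂ * ρ Δ₁)
    (W : (n : ℕ) → (Fin (n + 1) → Set X) → R)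
    (hW₁ : ∀ Δ : Fin 1 → Set X, W 0 Δ = ρ (Δ 0))
    (hWrec : ∀ (n : ℕ) (Δ : Fin (n + 2) → Set X),
      W (n + 1) Δ = ρ (Δ (Fin.last (n + 1))) * W n (fun i => Δ i.castSucc)
        - ∑ i : Fin (n + 1), W n
            (Function.update (fun j : Fin (n + 1) => Δ j.castSucc) i
              (Δ i.castSucc ∩ Δ (Fin.last (n + 1))))) :
    ∀ (n : ℕ) (Δ : Fin (n + 1) → Set X) (π : Equiv.Perm (Fin (n + 1))),
      W n (fun i => Δ (π i)) = W n Δ := by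
  intro n
  induction n with
  | zero =>
    intro Δ π
    haveI : Subsingleton (Fin (0 + 1)) := Fin.subsingleton_one
    have h : ∀ i : Fin (0 + 1), π i = i := fun i => Subsingleton.elim _ _
    simp only [h]
  | succ n IH =>
    have SL : ∀ (Δ : Fin (n + 2) → Set X) (k : Fin (n + 2)),
        W (n + 1) (fun i => Δ (Equiv.swap k (Fin.last (n + 1)) i)) = W (n + 1) Δ := by
      intro Δ k
      by_cases hk : k = Fin.last (n + 1)
      · subst hk
        simp [Equiv.swap_self]
      · by_cases hk2 : k = (Fin.last n).castSucc
        · subst hk2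
          exact wick_swapPL hcomm hW₁ hWrec n Δ
        · have hplast : (Fin.last n).castSucc ≠ Fin.last (n + 1) :=
            (Fin.castSucc_lt_last _).ne
          have hclast : Equiv.swap k ((Fin.last n).castSucc) (Fin.last (n + 1))
              = Fin.last (n + 1) :=
            Equiv.swap_apply_of_ne_of_ne (Ne.symm hk) (Ne.symm hplast)
          have hconj : Equiv.swap k (Fin.last (n + 1))
              = Equiv.swap k ((Fin.last n).castSucc)
                * Equiv.swap ((Fin.last n).castSucc) (Fin.last (n + 1))
                * (Equiv.swap k ((Fin.last n).castSucc))⁻¹ := by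
            have h := Equiv.swap_apply_apply (Equiv.swap k ((Fin.last n).castSucc))
              ((Fin.last n).castSucc) (Fin.last (n + 1))
            rwa [hclast, Equiv.swap_apply_right] at h
          have hkey : ∀ i, Equiv.swap k (Fin.last (n + 1)) i
              = Equiv.swap k ((Fin.last n).castSucc)
                  (Equiv.swap ((Fin.last n).castSucc) (Fin.last (n + 1))
                    (Equiv.swap k ((Fin.last n).castSucc) i)) := by
            intro i
            rw [hconj]
            simp [Equiv.Perm.mul_apply, Equiv.swap_inv]
          have hstep1 : (fun i => Δ (Equiv.swap k (Fin.last (n + 1)) i))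
              = fun i => (fun j => Δ (Equiv.swap k ((Fin.last n).castSucc)
                  (Equiv.swap ((Fin.last n).castSucc) (Fin.last (n + 1)) j)))
                  (Equiv.swap k ((Fin.last n).castSucc) i) :=
            funext fun i => by rw [hkey]
          rw [hstep1]
          refine (wick_fixlast hWrec n IH
            (fun j => Δ (Equiv.swap k ((Fin.last n).castSucc)
              (Equiv.swap ((Fin.last n).castSucc) (Fin.last (n + 1)) j)))
            (Equiv.swap k ((Fin.last n).castSucc)) hclast).trans ?_
          calc W (n + 1) (fun j => Δ (Equiv.swap k ((Fin.last n).castSucc)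
                  (Equiv.swap ((Fin.last n).castSucc) (Fin.last (n + 1)) j)))
              = W (n + 1) (fun x => Δ (Equiv.swap k ((Fin.last n).castSucc) x)) :=
                wick_swapPL hcomm hW₁ hWrec n
                  (fun x => Δ (Equiv.swap k ((Fin.last n).castSucc) x))
            _ = W (n + 1) Δ :=
                wick_fixlast hWrec n IH Δ (Equiv.swap k ((Fin.last n).castSucc)) hclast
    intro Δ π
    have hfix : (Equiv.swap (π (Fin.last (n + 1))) (Fin.last (n + 1)) * π)
        (Fin.last (n + 1)) = Fin.last (n + 1) := by
      simp [Equiv.Perm.mul_apply]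
    have h1 : (fun i => Δ (π i))
        = fun i => (fun j => Δ (Equiv.swap (π (Fin.last (n + 1))) (Fin.last (n + 1)) j))
            ((Equiv.swap (π (Fin.last (n + 1))) (Fin.last (n + 1)) * π) i) := by
      funext i
      simp [Equiv.Perm.mul_apply, Equiv.swap_apply_self]
    rw [h1]
    exact (wick_fixlast hWrec n IH
      (fun j => Δ (Equiv.swap (π (Fin.last (n + 1))) (Fin.last (n + 1)) j))
      (Equiv.swap (π (Fin.last (n + 1))) (Fin.last (n + 1)) * π) hfix).trans
      (SL Δ (π (Fin.last (n + 1))))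
end

section
/- Let n ≥ 1 and let M : Fin n × Fin n → ℂ be symmetric (M(i,j) = M(j,i)). Define the doubled matrix A indexed by Fin n × Fin 2 by A((i,a),(j,b)) = M(i,j) for all a, b ∈ Fin 2, and define its hafnian by haf(A) = Σ_σ Π_{p : p < σ(p)} A(p, σ(p)), the sum over all fixed-point-free involutions σ of Fin n × Fin 2 and the order on pairs being lexicographic. Then haf(A) = Σ_{π ∈ Perm(Fin n)} 2^{n − c(π)} Π_{i} M(i, π(i)) = det₂[M], where c(π) is the number of orbits of the action of π on Fin n (the number of cycles, counting fixed points as cycles). -/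
open Finset

theorem Equiv.Perm.apply_inv_self {α : Type*} (f : Equiv.Perm α) (x : α) : f (f⁻¹ x) = x := by simp

theorem Equiv.Perm.inv_apply_self {α : Type*} (f : Equiv.Perm α) (x : α) : f⁻¹ (f x) = x := by simp

open Equiv in
section
namespace HafAux

def flp : Fin 2 → Fin 2 := fun b => 1 - b

lemma flp_flp : ∀ b, flp (flp b) = b := by decide
lemma flp_ne : ∀ b, flp b ≠ b := by decide
lemma eq_flp_of_ne : ∀ {a b : Fin 2}, a ≠ b → a = flp b := by decide
lemma flp_zero : flp 0 = 1 := by decide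
lemma flp_one : flp 1 = 0 := by decide

variable {n : ℕ}

lemma plt_trich (p q : Fin n × Fin 2) (h : p ≠ q) :
    (p.1 < q.1 ∨ (p.1 = q.1 ∧ p.2 < q.2)) ∨ (q.1 < p.1 ∨ (q.1 = p.1 ∧ q.2 < p.2)) := by
  rcases lt_trichotomy p.1 q.1 with h1 | h1 | h1
  · exact Or.inl (Or.inl h1)
  · rcases lt_trichotomy p.2 q.2 with h2 | h2 | h2
    · exact Or.inl (Or.inr ⟨h1, h2⟩)
    · exact absurd (Prod.ext h1 h2) h
    · exact Or.inr (Or.inr ⟨h1.symm, h2⟩)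
  · exact Or.inr (Or.inl h1)

lemma plt_asymm {p q : Fin n × Fin 2}
    (h : p.1 < q.1 ∨ (p.1 = q.1 ∧ p.2 < q.2)) :
    ¬ (q.1 < p.1 ∨ (q.1 = p.1 ∧ q.2 < p.2)) := by
  rcases p with ⟨⟨a,ha⟩,⟨b,hb⟩⟩
  rcases q with ⟨⟨c,hc⟩,⟨d,hd⟩⟩
  simp only [Prod.fst, Prod.snd, Fin.lt_def, Fin.ext_iff] at h ⊢
  omega

def dblFun (π : Perm (Fin n)) (ε : Fin n → Fin 2) : Fin n × Fin 2 → Fin n × Fin 2 :=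
  fun p => if p.2 = ε p.1 then (π p.1, flp (ε (π p.1))) else (π⁻¹ p.1, ε (π⁻¹ p.1))

lemma dblFun_out (π : Perm (Fin n)) (ε : Fin n → Fin 2) (i : Fin n) :
    dblFun π ε (i, ε i) = (π i, flp (ε (π i))) := if_pos rfl

lemma dblFun_in (π : Perm (Fin n)) (ε : Fin n → Fin 2) (i : Fin n) :
    dblFun π ε (i, flp (ε i)) = (π⁻¹ i, ε (π⁻¹ i)) := if_neg (flp_ne _)

lemma dblFun_invol (π : Perm (Fin n)) (ε : Fin n → Fin 2) :
    Function.Involutive (dblFun π ε) := by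
  rintro ⟨i, a⟩
  by_cases h : a = ε i
  · subst h
    rw [dblFun_out, dblFun_in, Perm.inv_apply_self]
  · rw [eq_flp_of_ne h, dblFun_in, dblFun_out, Perm.apply_inv_self, ← eq_flp_of_ne h]

def dblInv (π : Perm (Fin n)) (ε : Fin n → Fin 2) : Perm (Fin n × Fin 2) :=
  Function.Involutive.toPerm _ (dblFun_invol π ε)

lemma dblInv_apply (π : Perm (Fin n)) (ε : Fin n → Fin 2) (p : Fin n × Fin 2) :
    dblInv π ε p = dblFun π ε p := rfl

lemma dblInv_mul_self (π : Perm (Fin n)) (ε : Fin n → Fin 2) :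
    dblInv π ε * dblInv π ε = 1 := by
  apply Equiv.ext; intro p
  simp only [Equiv.Perm.mul_apply, Equiv.Perm.one_apply, dblInv_apply]
  exact dblFun_invol π ε p

lemma dblInv_fpf (π : Perm (Fin n)) (ε : Fin n → Fin 2) :
    ∀ p, dblInv π ε p ≠ p := by
  rintro ⟨i, a⟩ h
  rw [dblInv_apply] at h
  by_cases hc : a = ε i
  · subst hc
    rw [dblFun_out] at h
    have h1 : π i = i := congrArg Prod.fst h
    have h2 := congrArg Prod.snd h
    simp only at h2
    rw [h1] at h2
    exact flp_ne _ h2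
  · rw [eq_flp_of_ne hc, dblFun_in] at h
    have h1 : π⁻¹ i = i := congrArg Prod.fst h
    have h2 := congrArg Prod.snd h
    simp only at h2
    rw [h1] at h2
    exact flp_ne _ h2.symm



section ProdLemma
variable {n : ℕ} (M : Fin n → Fin n → ℂ)

lemma dblInv_out (π : Perm (Fin n)) (ε : Fin n → Fin 2) (i : Fin n) :
    dblInv π ε (i, ε i) = (π i, flp (ε (π i))) := dblFun_out π ε i

lemma dblInv_in (π : Perm (Fin n)) (ε : Fin n → Fin 2) (i : Fin n) :
    dblInv π ε (i, flp (ε i)) = (π⁻¹ i, ε (π⁻¹ i)) := dblFun_in π ε i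

lemma dblInv_vu (π : Perm (Fin n)) (ε : Fin n → Fin 2) (i : Fin n) :
    dblInv π ε (π i, flp (ε (π i))) = (i, ε i) := by
  have := dblInv_in π ε (π i)
  rwa [Perm.inv_apply_self] at this

lemma uv_ne (π : Perm (Fin n)) (ε : Fin n → Fin 2) (i : Fin n) :
    (i, ε i) ≠ (π i, flp (ε (π i))) := by
  intro h
  have h1 : i = π i := congrArg Prod.fst h
  have h2 := congrArg Prod.snd h
  simp only at h2
  rw [← h1] at h2
  exact flp_ne _ h2.symm

lemma prod_dblInv (hsym : ∀ i j, M i j = M j i) (π : Perm (Fin n)) (ε : Fin n → Fin 2) :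
    ∏ p ∈ univ.filter
        (fun p : Fin n × Fin 2 => p.1 < ((dblInv π ε) p).1 ∨
          (p.1 = ((dblInv π ε) p).1 ∧ p.2 < ((dblInv π ε) p).2)),
      M p.1 (((dblInv π ε) p).1) = ∏ i : Fin n, M i (π i) := by
  classical
  set σ := dblInv π ε with hσ
  set u : Fin n → Fin n × Fin 2 := fun i => (i, ε i) with hu
  set v : Fin n → Fin n × Fin 2 := fun i => (π i, flp (ε (π i))) with hv
  have hσu : ∀ i, σ (u i) = v i := fun i => dblInv_out π ε i
  have hσv : ∀ i, σ (v i) = u i := fun i => dblInv_vu π ε i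
  have huv : ∀ i, u i ≠ v i := fun i => uv_ne π ε i
  have key : ∀ a b : Fin n, u a = v b → False := by
    intro a b hab
    have h1 : a = π b := congrArg Prod.fst hab
    have h2 := congrArg Prod.snd hab
    simp only [hu, hv] at h1 h2
    rw [← h1] at h2
    exact flp_ne _ h2.symm
  set g : Fin n → Fin n × Fin 2 := fun i =>
    if (u i).1 < (v i).1 ∨ ((u i).1 = (v i).1 ∧ (u i).2 < (v i).2) then u i else v i with hg
  symm
  refine Finset.prod_bij (fun i _ => g i) ?_ ?_ ?_ ?_
  · intro i _
    simp only [mem_filter, mem_univ, true_and]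
    by_cases hc : (u i).1 < (v i).1 ∨ ((u i).1 = (v i).1 ∧ (u i).2 < (v i).2)
    · simp only [hg, if_pos hc]
      rw [hσu i]; exact hc
    · simp only [hg, if_neg hc]
      rw [hσv i]
      rcases plt_trich (u i) (v i) (huv i) with h | h
      · exact absurd h hc
      · exact h
  · intro i _ j _ hij
    simp only [hg] at hij
    by_cases hi : (u i).1 < (v i).1 ∨ ((u i).1 = (v i).1 ∧ (u i).2 < (v i).2) <;>
      by_cases hj : (u j).1 < (v j).1 ∨ ((u j).1 = (v j).1 ∧ (u j).2 < (v j).2)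
    · rw [if_pos hi, if_pos hj] at hij
      exact congrArg Prod.fst hij
    · rw [if_pos hi, if_neg hj] at hij
      exact absurd hij (fun h => key i j h)
    · rw [if_neg hi, if_pos hj] at hij
      exact absurd hij.symm (fun h => key j i h)
    · rw [if_neg hi, if_neg hj] at hij
      have := congrArg σ hij
      rw [hσv i, hσv j] at this
      exact congrArg Prod.fst this
  · rintro ⟨j, a⟩ hp
    simp only [mem_filter, mem_univ, true_and] at hp
    by_cases hc : a = ε j
    · refine ⟨j, mem_univ j, ?_⟩
      have hpu : (j, a) = u j := by rw [hu, hc]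
      have hLtp : (u j).1 < (v j).1 ∨ ((u j).1 = (v j).1 ∧ (u j).2 < (v j).2) := by
        rw [← hσu j, ← hpu]
        exact hp
      show g j = (j, a)
      simp only [hg, if_pos hLtp]
      exact hpu.symm
    · refine ⟨π⁻¹ j, mem_univ _, ?_⟩
      have hpv : (j, a) = v (π⁻¹ j) := by
        rw [hv]
        simp only [Perm.apply_inv_self]
        rw [eq_flp_of_ne hc]
      have hnc : ¬ ((u (π⁻¹ j)).1 < (v (π⁻¹ j)).1 ∨
          ((u (π⁻¹ j)).1 = (v (π⁻¹ j)).1 ∧ (u (π⁻¹ j)).2 < (v (π⁻¹ j)).2)) := by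
        intro hcc
        refine plt_asymm hcc ?_
        rw [← hσv (π⁻¹ j), ← hpv]
        exact hp
      show g (π⁻¹ j) = (j, a)
      simp only [hg, if_neg hnc]
      exact hpv.symm
  · intro i _
    show M i (π i) = M (g i).1 (σ (g i)).1
    by_cases hc : (u i).1 < (v i).1 ∨ ((u i).1 = (v i).1 ∧ (u i).2 < (v i).2)
    · simp only [hg, if_pos hc]
      rw [hσu i]
    · simp only [hg, if_neg hc]
      rw [hσv i]
      exact hsym i (π i)
end ProdLemma


section Inj
variable {n : ℕ}

def IsMin (π : Perm (Fin n)) (i : Fin n) : Prop := ∀ j, π.SameCycle i j → i ≤ j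

lemma pred_zpow (π : Perm (Fin n)) (P : Fin n → Prop) (hP : ∀ x, P x ↔ P (π x)) :
    ∀ (k : ℤ) (x), P x ↔ P ((π ^ k) x) := by
  have hP' : ∀ x, P x ↔ P (π⁻¹ x) := fun x => by
    rw [hP (π⁻¹ x), Perm.apply_inv_self]
  intro k
  induction k using Int.induction_on with
  | zero => intro x; simp
  | succ k ih =>
      intro x
      have h1 : (π ^ ((k : ℤ) + 1)) x = π ((π ^ (k : ℤ)) x) := by
        rw [show ((k : ℤ) + 1) = 1 + k by ring, zpow_add, zpow_one, Perm.mul_apply]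
      rw [h1]
      exact (ih x).trans (hP _)
  | pred k ih =>
      intro x
      have h1 : (π ^ (-(k : ℤ) - 1)) x = π⁻¹ ((π ^ (-(k : ℤ))) x) := by
        rw [show (-(k : ℤ) - 1) = (-1) + -k by ring, zpow_add, zpow_neg_one, Perm.mul_apply]
      rw [h1]
      exact (ih x).trans (hP' _)

lemma pred_sameCycle (π : Perm (Fin n)) (P : Fin n → Prop) (hP : ∀ x, P x ↔ P (π x))
    {i j : Fin n} (h : π.SameCycle i j) : P i ↔ P j := by
  obtain ⟨k, hk⟩ := h
  rw [← hk]
  exact pred_zpow π P hP k i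

lemma exists_min (π : Perm (Fin n)) (i : Fin n) :
    ∃ m, π.SameCycle i m ∧ IsMin π m := by
  classical
  have hne : (univ.filter (fun j => π.SameCycle i j)).Nonempty :=
    ⟨i, by simp [Perm.SameCycle.refl]⟩
  have hmem := Finset.min'_mem _ hne
  rw [Finset.mem_filter] at hmem
  refine ⟨_, hmem.2, ?_⟩
  intro j hj
  refine Finset.min'_le _ j ?_
  rw [Finset.mem_filter]
  exact ⟨mem_univ _, hmem.2.trans hj⟩

lemma dblInv_injective (π π' : Perm (Fin n)) (ε ε' : Fin n → Fin 2)
    (hε : ∀ i, IsMin π i → ε i = 0) (hε' : ∀ i, IsMin π' i → ε' i = 0)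
    (h : dblInv π ε = dblInv π' ε') : π = π' ∧ ε = ε' := by
  classical
  -- dichotomy
  have dich : ∀ i, (ε i = ε' i ∧ π i = π' i ∧ ε (π i) = ε' (π i)) ∨
      (ε i ≠ ε' i ∧ π i = π'⁻¹ i ∧ ε (π i) ≠ ε' (π i)) := by
    intro i
    have happ : dblInv π ε (i, ε i) = dblInv π' ε' (i, ε i) := by rw [h]
    rw [dblInv_out] at happ
    by_cases heq : ε i = ε' i
    · rw [show ((i, ε i) : Fin n × Fin 2) = (i, ε' i) by rw [heq], dblInv_out] at happ
      have h1 : π i = π' i := congrArg Prod.fst happ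
      have h2 := congrArg Prod.snd happ
      simp only at h2
      rw [← h1] at h2
      have h3 : ε (π i) = ε' (π i) := by
        have := congrArg flp h2
        rwa [flp_flp, flp_flp] at this
      exact Or.inl ⟨heq, h1, h3⟩
    · rw [show ((i, ε i) : Fin n × Fin 2) = (i, flp (ε' i)) by rw [eq_flp_of_ne heq],
        dblInv_in] at happ
      have h1 : π i = π'⁻¹ i := congrArg Prod.fst happ
      have h2 := congrArg Prod.snd happ
      simp only at h2
      rw [← h1] at h2
      have h3 : ε (π i) ≠ ε' (π i) := by
        intro hx
        rw [← hx] at h2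
        exact flp_ne _ h2
      exact Or.inr ⟨heq, h1, h3⟩
  set P : Fin n → Prop := fun i => ε i = ε' i with hPdef
  have hP : ∀ x, P x ↔ P (π x) := by
    intro x
    constructor
    · intro hx
      rcases dich x with ⟨_, _, h3⟩ | ⟨h1, _, _⟩
      · exact h3
      · exact absurd hx h1
    · intro hx
      rcases dich x with ⟨h1, _, _⟩ | ⟨_, _, h3⟩
      · exact h1
      · exact absurd hx h3
  -- main claim: P holds everywhere
  have hPall : ∀ i, P i := by
    intro i
    obtain ⟨m, him, hmin⟩ := exists_min π i
    have hPm : P m := by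
      by_contra hPm
      have hnc : ∀ x, π.SameCycle m x → ¬ P x := by
        intro x hx hPx
        exact hPm ((pred_sameCycle π P hP hx).mpr hPx)
      have claimA : ∀ x, π.SameCycle m x → π' x = π⁻¹ x := by
        intro x hx
        have hx' : π.SameCycle m (π⁻¹ x) := hx.trans ⟨-1, by simp⟩
        rcases dich (π⁻¹ x) with ⟨h1, _, _⟩ | ⟨_, h2, _⟩
        · exact absurd h1 (hnc _ hx')
        · rw [Perm.apply_inv_self] at h2
          have := congrArg π' h2
          rwa [Perm.apply_inv_self] at this
      have claimB : ∀ k : ℤ, (π' ^ k) m = (π ^ (-k)) m := by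
        intro k
        induction k using Int.induction_on with
        | zero => simp
        | succ k ih =>
            have hsc : π.SameCycle m ((π ^ (-(k:ℤ))) m) := ⟨-(k:ℤ), rfl⟩
            have h1 : (π' ^ ((k : ℤ) + 1)) m = π' ((π' ^ (k : ℤ)) m) := by
              rw [show ((k : ℤ) + 1) = 1 + k by ring, zpow_add, zpow_one, Perm.mul_apply]
            rw [h1, ih, claimA _ hsc]
            rw [show (-(((k : ℤ)) + 1)) = (-1) + -k by ring, zpow_add, zpow_neg_one,
              Perm.mul_apply]
        | pred k ih =>
            simp only [neg_neg] at ih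
            have hsc : π.SameCycle m ((π ^ ((k:ℤ))) m) := ⟨(k:ℤ), rfl⟩
            have h1 : (π' ^ (-(k : ℤ) - 1)) m = π'⁻¹ ((π' ^ (-(k : ℤ))) m) := by
              rw [show (-(k : ℤ) - 1) = (-1) + -k by ring, zpow_add, zpow_neg_one,
                Perm.mul_apply]
            rw [h1, ih]
            have hPx : ¬ P ((π ^ ((k:ℤ))) m) := hnc _ hsc
            have hstep : π'⁻¹ ((π ^ ((k:ℤ))) m) = π ((π ^ ((k:ℤ))) m) := by
              rcases dich ((π ^ ((k:ℤ))) m) with ⟨h1', _, _⟩ | ⟨_, h2', _⟩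
              · exact absurd h1' hPx
              · exact h2'.symm
            rw [hstep]
            rw [show (-(-(k : ℤ) - 1)) = 1 + k by ring, zpow_add, zpow_one, Perm.mul_apply]
      have hmin' : IsMin π' m := by
        intro j hj
        obtain ⟨k, hk⟩ := hj
        rw [claimB k] at hk
        exact hmin j ⟨-k, hk⟩
      have h0' : ε' m = 0 := hε' m hmin'
      have h0 : ε m = 0 := hε m hmin
      apply hPm
      show ε m = ε' m
      rw [h0, h0']
    exact (pred_sameCycle π P hP him).mpr hPm
  have hππ' : π = π' := by
    apply Equiv.ext; intro i
    rcases dich i with ⟨_, h1, _⟩ | ⟨h1, _, _⟩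
    · exact h1
    · exact absurd (hPall i) h1
  exact ⟨hππ', funext hPall⟩

end Inj


section Surj
variable {n : ℕ}

def tau : Perm (Fin n × Fin 2) :=
  Function.Involutive.toPerm (fun p => (p.1, flp p.2))
    (fun p => by simp [flp_flp])

lemma tau_apply (p : Fin n × Fin 2) : tau p = (p.1, flp p.2) := rfl

lemma tau_mul_self : (tau : Perm (Fin n × Fin 2)) * tau = 1 := by
  apply Equiv.ext; intro p
  simp [Perm.mul_apply, tau_apply, flp_flp]

lemma tau_inv : (tau : Perm (Fin n × Fin 2))⁻¹ = tau :=
  inv_eq_of_mul_eq_one_right tau_mul_self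

lemma tau_fp (p : Fin n × Fin 2) : tau p ≠ p := by
  intro h
  exact flp_ne p.2 (congrArg Prod.snd h)

lemma sigma_inv (σ : Perm (Fin n × Fin 2)) (hinv : σ * σ = 1) : σ⁻¹ = σ :=
  inv_eq_of_mul_eq_one_right hinv

lemma conj_zpow (σ : Perm (Fin n × Fin 2)) (hinv : σ * σ = 1) (k : ℤ) :
    tau * (σ * tau) ^ k * tau = (σ * tau) ^ (-k) := by
  have hbase : tau * (σ * tau) * tau = (σ * tau)⁻¹ := by
    rw [mul_inv_rev, sigma_inv σ hinv, tau_inv]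
    calc tau * (σ * tau) * tau = tau * σ * (tau * tau) := by group
      _ = tau * σ := by rw [tau_mul_self, mul_one]
  have hmz := map_zpow (MulAut.conj (tau : Perm (Fin n × Fin 2))) (σ * tau) k
  simp only [MulAut.conj_apply] at hmz
  rw [tau_inv] at hmz
  rw [hmz, hbase, inv_zpow, zpow_neg]

lemma conj_zpow_apply (σ : Perm (Fin n × Fin 2)) (hinv : σ * σ = 1) (k : ℤ)
    (p : Fin n × Fin 2) :
    tau ((((σ * tau) ^ k : Perm (Fin n × Fin 2))) p) = (((σ * tau) ^ (-k) : Perm (Fin n × Fin 2))) (tau p) := by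
  have h := conj_zpow σ hinv k
  have h2 : tau * (σ * tau) ^ k = (σ * tau) ^ (-k) * tau := by
    have := congrArg (fun g => g * tau) h
    calc tau * (σ * tau) ^ k = tau * (σ * tau) ^ k * (tau * tau) := by
          rw [tau_mul_self, mul_one]
      _ = (tau * (σ * tau) ^ k * tau) * tau := by group
      _ = (σ * tau) ^ (-k) * tau := by rw [h]
  have := Equiv.ext_iff.mp h2 p
  simpa [Perm.mul_apply] using this

lemma noStab (σ : Perm (Fin n × Fin 2)) (hinv : σ * σ = 1) (hfp : ∀ p, σ p ≠ p)
    (p : Fin n × Fin 2) : ¬ (σ * tau).SameCycle p (tau p) := by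
  set ρ := σ * tau with hρ
  rintro ⟨k, hk⟩
  have hσσ : ∀ q, σ (σ q) = q := fun q => by
    have := Equiv.ext_iff.mp hinv q
    simpa [Perm.mul_apply] using this
  rcases Int.even_or_odd k with ⟨j, hj⟩ | ⟨j, hj⟩
  · -- k = j + j
    apply tau_fp ((ρ ^ j) p)
    have h1 : tau ((ρ ^ j) p) = (ρ ^ (-j)) (tau p) := by
      have hc := conj_zpow_apply σ hinv j p
      rw [← hρ] at hc
      exact hc
    rw [h1, ← hk]
    have : (ρ ^ (-j)) ((ρ ^ k) p) = (ρ ^ (-j + k)) p := by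
      rw [zpow_add, Perm.mul_apply]
    rw [this, show -j + k = j by omega]
  · -- k = 2j + 1
    apply hfp ((ρ ^ (j + 1)) p)
    have hστ : σ = ρ * tau := by
      rw [hρ]
      calc σ = σ * (tau * tau) := by rw [tau_mul_self, mul_one]
        _ = σ * tau * tau := by group
    have h1 : σ ((ρ ^ (j+1)) p) = ρ (tau ((ρ ^ (j+1)) p)) := by
      rw [hστ]; rfl
    have hc := conj_zpow_apply σ hinv (j+1) p
    rw [← hρ] at hc
    calc σ ((ρ ^ (j + 1)) p)
        = ρ (tau ((ρ ^ (j+1)) p)) := by rw [h1]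
      _ = ρ ((ρ ^ (-(j+1))) (tau p)) := by rw [hc]
      _ = ρ ((ρ ^ (-(j+1))) ((ρ ^ k) p)) := by rw [hk]
      _ = (ρ ^ ((1 : ℤ) + (-(j+1) + k))) p := by
            rw [zpow_add, zpow_add, zpow_one]; rfl
      _ = (ρ ^ (j + 1)) p := by rw [show (1 : ℤ) + (-(j+1) + k) = j + 1 by omega]

lemma dblInv_surjective (σ : Perm (Fin n × Fin 2)) (hinv : σ * σ = 1)
    (hfp : ∀ p, σ p ≠ p) :
    ∃ (π : Perm (Fin n)) (ε : Fin n → Fin 2),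
      (∀ i, IsMin π i → ε i = 0) ∧ dblInv π ε = σ := by
  classical
  set ρ := σ * tau with hρdef
  have hσσ : ∀ q, σ (σ q) = q := fun q => by
    have := Equiv.ext_iff.mp hinv q
    simpa [Perm.mul_apply] using this
  have hρapp : ∀ p, ρ p = σ (tau p) := fun p => rfl
  have hστ : ∀ p, σ p = ρ (tau p) := by
    intro p
    rw [hρapp, tau_apply, tau_apply]
    simp [flp_flp]
  -- orbit first-component minimum
  have hne : ∀ p : Fin n × Fin 2,
      ((univ.filter (fun q => ρ.SameCycle p q)).image Prod.fst).Nonempty := by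
    intro p
    exact ⟨p.1, Finset.mem_image_of_mem _ (Finset.mem_filter.mpr
      ⟨mem_univ _, Equiv.Perm.SameCycle.refl _ _⟩)⟩
  set fm : Fin n × Fin 2 → Fin n :=
    fun p => ((univ.filter (fun q => ρ.SameCycle p q)).image Prod.fst).min' (hne p) with hfm
  have hfm_congr : ∀ p q, ρ.SameCycle p q → fm p = fm q := by
    intro p q hpq
    have : (univ.filter (fun r => ρ.SameCycle p r)) =
        (univ.filter (fun r => ρ.SameCycle q r)) := by
      ext r
      simp only [Finset.mem_filter, mem_univ, true_and]
      exact ⟨fun h => hpq.symm.trans h, fun h => hpq.trans h⟩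
    simp only [hfm]
    congr 1
    rw [this]
  have hτ_orbit : ∀ p q, ρ.SameCycle (tau p) q ↔ ρ.SameCycle p (tau q) := by
    intro p q
    have htt : ∀ r : Fin n × Fin 2, tau (tau r) = r := by
      intro r; rw [tau_apply, tau_apply]; simp [flp_flp]
    constructor
    · rintro ⟨k, hk⟩
      refine ⟨-k, ?_⟩
      have hc := conj_zpow_apply σ hinv k (tau p)
      rw [← hρdef] at hc
      rw [hk, htt] at hc
      exact hc.symm
    · rintro ⟨k, hk⟩
      refine ⟨-k, ?_⟩
      have hc := conj_zpow_apply σ hinv k p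
      rw [← hρdef] at hc
      rw [hk, htt] at hc
      exact hc.symm
  have hfm_tau : ∀ p, fm (tau p) = fm p := by
    intro p
    have himg : ((univ.filter (fun q => ρ.SameCycle (tau p) q)).image Prod.fst) =
        ((univ.filter (fun q => ρ.SameCycle p q)).image Prod.fst) := by
      ext x
      simp only [Finset.mem_image, Finset.mem_filter, mem_univ, true_and]
      constructor
      · rintro ⟨q, hq, rfl⟩
        exact ⟨tau q, (hτ_orbit p q).mp hq, rfl⟩
      · rintro ⟨q, hq, rfl⟩
        refine ⟨tau q, ?_, rfl⟩
        rw [hτ_orbit]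
        have h2 : tau (tau q) = q := by rw [tau_apply, tau_apply]; simp [flp_flp]
        rw [h2]
        exact hq
    simp only [hfm]
    congr 1
    try rw [himg]
  -- the set membership predicate
  set InS : Fin n × Fin 2 → Prop := fun p => ρ.SameCycle p (fm p, 1) with hInS
  have hxor : ∀ p, InS p ↔ ¬ InS (tau p) := by
    intro p
    have hmem := Finset.min'_mem _ (hne p)
    rw [Finset.mem_image] at hmem
    obtain ⟨q, hq, hq1⟩ := hmem
    rw [Finset.mem_filter] at hq
    have hq' : ρ.SameCycle p q := hq.2
    have hnostab := noStab σ hinv hfp (fm p, (1 : Fin 2))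
    have htau1 : tau ((fm p, (1:Fin 2)) : Fin n × Fin 2) = (fm p, 0) := by
      rw [tau_apply]
      show ((fm p : Fin n), flp 1) = (fm p, 0)
      rw [flp_one]
    constructor
    · intro h1 h2
      rw [hInS] at h1 h2
      simp only [hfm_tau] at h2
      have h3 : ρ.SameCycle p (tau (fm p, 1)) := (hτ_orbit p _).mp h2
      apply hnostab
      rw [htau1] at h3 ⊢
      exact h1.symm.trans h3
    · intro h2
      show ρ.SameCycle p (fm p, 1)
      by_cases hcase : q.2 = 1
      · have hqq : q = (fm p, 1) := Prod.ext hq1 hcase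
        rw [← hqq]; exact hq'
      · exfalso
        apply h2
        show ρ.SameCycle (tau p) (fm (tau p), 1)
        rw [hfm_tau p]
        rw [hτ_orbit p ((fm p, 1) : Fin n × Fin 2), htau1]
        have hq2 : q = (fm p, 0) := by
          refine Prod.ext hq1 ?_
          have hb : ∀ b : Fin 2, b ≠ 1 → b = 0 := by decide
          exact hb _ hcase
        rw [← hq2]
        exact hq'
  set ε : Fin n → Fin 2 := fun i => if InS (i, 1) then 0 else 1 with hε
  have hInSflp : ∀ i, InS (i, flp (ε i)) := by
    intro i
    by_cases hcase : InS (i, 1)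
    · simp only [hε, if_pos hcase, flp_zero]
      exact hcase
    · simp only [hε, if_neg hcase]
      have h1 : flp 1 = (0 : Fin 2) := by decide
      rw [h1]
      have h2 := (hxor (i, 1))
      have h3 : tau ((i, (1:Fin 2)) : Fin n × Fin 2) = (i, 0) := by
        rw [tau_apply]
        show ((i : Fin n), flp 1) = (i, 0)
        rw [flp_one]
      rw [h3] at h2
      by_contra hcon
      exact hcase (h2.mpr hcon)
  have hNotInS : ∀ i, ¬ InS (i, ε i) := by
    intro i
    by_cases hcase : InS (i, 1)
    · simp only [hε, if_pos hcase]
      have h2 := (hxor (i, 1)).mp hcase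
      have h3 : tau ((i, (1:Fin 2)) : Fin n × Fin 2) = (i, 0) := by
        rw [tau_apply]
        show ((i : Fin n), flp 1) = (i, 0)
        rw [flp_one]
      rw [h3] at h2
      exact h2
    · simp only [hε, if_neg hcase]
      exact hcase
  have hsnd : ∀ p, InS p → p.2 = flp (ε p.1) := by
    rintro ⟨i, a⟩ hp
    by_cases hcase : a = flp (ε i)
    · exact hcase
    · exfalso
      have : a = ε i := by
        have := eq_flp_of_ne hcase
        rwa [flp_flp] at this
      rw [this] at hp
      exact hNotInS i hp
  have hInS_same : ∀ p q, ρ.SameCycle p q → (InS p ↔ InS q) := by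
    intro p q hpq
    rw [hInS]
    simp only
    rw [hfm_congr p q hpq]
    exact ⟨fun h => hpq.symm.trans h, fun h => hpq.trans h⟩
  -- the permutation
  set f : Fin n → Fin n := fun i => (ρ (i, flp (ε i))).1 with hf
  have hkey : ∀ i, ρ (i, flp (ε i)) = (f i, flp (ε (f i))) := by
    intro i
    have h1 : ρ.SameCycle (i, flp (ε i)) (ρ (i, flp (ε i))) := ⟨1, by simp⟩
    have h2 : InS (ρ (i, flp (ε i))) :=
      (hInS_same _ _ h1).mp (hInSflp i)
    have h3 := hsnd _ h2
    exact Prod.ext rfl h3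
  have hinj : Function.Injective f := by
    intro i j hij
    have h1 : ρ (i, flp (ε i)) = ρ (j, flp (ε j)) := by
      rw [hkey i, hkey j, hij]
    have := ρ.injective h1
    exact congrArg Prod.fst this
  have hbij : Function.Bijective f := Finite.injective_iff_bijective.mp hinj
  set π : Perm (Fin n) := Equiv.ofBijective f hbij with hπ
  have hπapp : ∀ i, π i = f i := fun i => rfl
  have hρout : ∀ i, ρ (i, flp (ε i)) = (π i, flp (ε (π i))) := by
    intro i
    rw [hπapp]
    exact hkey i
  have hρinv_out : ∀ i, ρ⁻¹ (i, flp (ε i)) = (π⁻¹ i, flp (ε (π⁻¹ i))) := by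
    intro i
    have h1 := hρout (π⁻¹ i)
    rw [Perm.apply_inv_self] at h1
    rw [← h1, Perm.inv_apply_self]
  have hσout : ∀ i, σ (i, ε i) = (π i, flp (ε (π i))) := by
    intro i
    rw [hστ ((i, ε i) : Fin n × Fin 2)]
    have htx : tau ((i, ε i) : Fin n × Fin 2) = (i, flp (ε i)) := tau_apply _
    rw [htx]
    exact hρout i
  -- iterates
  have hiter : ∀ k : ℤ, ∀ i : Fin n,
      (ρ ^ k) (i, flp (ε i)) = ((π ^ k) i, flp (ε ((π ^ k) i))) := by
    intro k
    induction k using Int.induction_on with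
    | zero => intro i; simp
    | succ k ih =>
        intro i
        have h1 : (ρ ^ ((k : ℤ) + 1)) (i, flp (ε i)) = ρ ((ρ ^ (k : ℤ)) (i, flp (ε i))) := by
          rw [show ((k : ℤ) + 1) = 1 + k by ring, zpow_add, zpow_one, Perm.mul_apply]
        have h2 : (π ^ ((k : ℤ) + 1)) i = π ((π ^ (k : ℤ)) i) := by
          rw [show ((k : ℤ) + 1) = 1 + k by ring, zpow_add, zpow_one, Perm.mul_apply]
        rw [h1, ih i, hρout, h2]
    | pred k ih =>
        intro i
        have h1 : (ρ ^ (-(k : ℤ) - 1)) (i, flp (ε i)) = ρ⁻¹ ((ρ ^ (-(k : ℤ))) (i, flp (ε i))) := by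
          rw [show (-(k : ℤ) - 1) = (-1) + -k by ring, zpow_add, zpow_neg_one, Perm.mul_apply]
        have h2 : (π ^ (-(k : ℤ) - 1)) i = π⁻¹ ((π ^ (-(k : ℤ))) i) := by
          rw [show (-(k : ℤ) - 1) = (-1) + -k by ring, zpow_add, zpow_neg_one, Perm.mul_apply]
        rw [h1, ih i, hρinv_out, h2]
  -- constraint
  have hconstraint : ∀ i, IsMin π i → ε i = 0 := by
    intro i hmini
    -- the orbit of (i, flp (ε i)) consists exactly of (j, flp (ε j)) for j in the π-cycle of i
    have hOC : ∀ q, ρ.SameCycle (i, flp (ε i)) q ↔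
        ∃ j, π.SameCycle i j ∧ q = (j, flp (ε j)) := by
      intro q
      constructor
      · rintro ⟨k, hk⟩
        refine ⟨(π ^ k) i, ⟨k, rfl⟩, ?_⟩
        rw [← hk, hiter k i]
      · rintro ⟨j, ⟨k, hk⟩, rfl⟩
        refine ⟨k, ?_⟩
        rw [hiter k i, hk]
      -- image of fst over the orbit
    have himg : ((univ.filter (fun q => ρ.SameCycle (i, flp (ε i)) q)).image Prod.fst) =
        univ.filter (fun j => π.SameCycle i j) := by
      ext x
      simp only [Finset.mem_image, Finset.mem_filter, mem_univ, true_and]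
      constructor
      · rintro ⟨q, hq, rfl⟩
        obtain ⟨j, hj, rfl⟩ := (hOC q).mp hq
        exact hj
      · intro hx
        exact ⟨(x, flp (ε x)), (hOC _).mpr ⟨x, hx, rfl⟩, rfl⟩
    have hfmi : fm (i, flp (ε i)) = i := by
      apply le_antisymm
      · apply Finset.min'_le
        rw [himg, Finset.mem_filter]
        exact ⟨mem_univ _, Equiv.Perm.SameCycle.refl _ _⟩
      · apply Finset.le_min'
        intro y hy
        rw [himg, Finset.mem_filter] at hy
        exact hmini y hy.2
    have hS : ρ.SameCycle (i, flp (ε i)) (fm (i, flp (ε i)), 1) := hInSflp i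
    rw [hfmi] at hS
    obtain ⟨j, hj, hj2⟩ := (hOC _).mp hS
    have h1 : i = j := congrArg Prod.fst hj2
    have h2 : (1 : Fin 2) = flp (ε j) := congrArg Prod.snd hj2
    rw [← h1] at h2
    have := congrArg flp h2
    rw [flp_flp] at this
    rw [← this]
    rfl
  refine ⟨π, ε, hconstraint, ?_⟩
  apply Equiv.ext
  rintro ⟨i, a⟩
  by_cases hcase : a = ε i
  · rw [hcase, dblInv_out, hσout]
  · rw [eq_flp_of_ne hcase, dblInv_in]
    have h1 : σ (π⁻¹ i, ε (π⁻¹ i)) = (i, flp (ε i)) := by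
      rw [hσout (π⁻¹ i), Perm.apply_inv_self]
    rw [← h1, hσσ]

end Surj


section Count
variable {n : ℕ}

instance isMin_dec (π : Perm (Fin n)) : DecidablePred (IsMin π) := fun i =>
  show Decidable (∀ j, π.SameCycle i j → i ≤ j) from inferInstance

lemma isMin_of_fixed (π : Perm (Fin n)) (i : Fin n) (h : π i = i) : IsMin π i := by
  intro j hj
  obtain ⟨k, hk⟩ := hj
  rw [Equiv.Perm.zpow_apply_eq_self_of_apply_eq_self h k] at hk
  exact le_of_eq hk

lemma card_minima (π : Perm (Fin n)) :
    (univ.filter (fun i => IsMin π i)).card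
      = π.cycleType.card + (univ.filter fun i => π i = i).card := by
  classical
  have hsplit := Finset.card_filter_add_card_filter_not
    (s := univ.filter (fun i => IsMin π i)) (fun i => π i = i)
  have hfix : (univ.filter (fun i => IsMin π i)).filter (fun i => π i = i)
      = univ.filter (fun i => π i = i) := by
    ext i
    simp only [Finset.mem_filter, mem_univ, true_and]
    exact ⟨fun h => h.2, fun h => ⟨isMin_of_fixed π i h, h⟩⟩
  have hbij : (((univ.filter (fun i => IsMin π i)).filter (fun i => ¬ π i = i))).card
      = π.cycleFactorsFinset.card := by
    apply Finset.card_bij (fun i _ => π.cycleOf i)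
    · intro a ha
      simp only [Finset.mem_filter, mem_univ, true_and] at ha
      exact Equiv.Perm.cycleOf_mem_cycleFactorsFinset_iff.mpr
        (Equiv.Perm.mem_support.mpr ha.2)
    · intro a ha b hb hab
      simp only [Finset.mem_filter, mem_univ, true_and] at ha hb
      have hamem : a ∈ (π.cycleOf a).support :=
        Equiv.Perm.mem_support_cycleOf_iff.mpr
          ⟨Equiv.Perm.SameCycle.refl _ _, Equiv.Perm.mem_support.mpr ha.2⟩
      rw [hab] at hamem
      have hsc : π.SameCycle b a := (Equiv.Perm.mem_support_cycleOf_iff.mp hamem).1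
      exact le_antisymm (ha.1 b hsc.symm) (hb.1 a hsc)
    · intro c hc
      have hcyc := (Equiv.Perm.mem_cycleFactorsFinset_iff.mp hc).1
      have hne := hcyc.nonempty_support
      obtain ⟨m, hmmem, hmle⟩ : ∃ m, m ∈ c.support ∧ ∀ j ∈ c.support, m ≤ j :=
        ⟨c.support.min' hne, Finset.min'_mem _ hne, fun j hj => Finset.min'_le _ j hj⟩
      have hceq : c = π.cycleOf m := Equiv.Perm.cycle_is_cycleOf hmmem hc
      have hmsup : m ∈ π.support := by
        rw [Equiv.Perm.mem_support]
        have h1 : c m = π m := (Equiv.Perm.mem_cycleFactorsFinset_iff.mp hc).2 m hmmem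
        have h2 : c m ≠ m := Equiv.Perm.mem_support.mp hmmem
        rw [← h1]; exact h2
      have hmin : IsMin π m := by
        intro j hj
        apply hmle
        rw [hceq]
        exact Equiv.Perm.mem_support_cycleOf_iff.mpr ⟨hj, hmsup⟩
      refine ⟨m, ?_, hceq.symm⟩
      simp only [Finset.mem_filter, mem_univ, true_and]
      exact ⟨hmin, Equiv.Perm.mem_support.mp hmsup⟩
  have hct : π.cycleType.card = π.cycleFactorsFinset.card := by
    simp [Equiv.Perm.cycleType]
  have hfixc : ((univ.filter (fun i => IsMin π i)).filter (fun i => π i = i)).card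
      = (univ.filter (fun i => π i = i)).card := by rw [hfix]
  omega

lemma card_epsSet (π : Perm (Fin n)) :
    (univ.filter (fun ε : Fin n → Fin 2 => ∀ i, IsMin π i → ε i = 0)).card
      = 2 ^ (n - (univ.filter (fun i => IsMin π i)).card) := by
  classical
  have hset : (univ.filter (fun ε : Fin n → Fin 2 => ∀ i, IsMin π i → ε i = 0))
      = Fintype.piFinset (fun i => if IsMin π i then ({0} : Finset (Fin 2)) else univ) := by
    ext f
    simp only [Finset.mem_filter, mem_univ, true_and, Fintype.mem_piFinset]
    constructor
    · intro h i
      by_cases hi : IsMin π i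
      · rw [if_pos hi]
        simp [h i hi]
      · rw [if_neg hi]; exact mem_univ _
    · intro h i hi
      have := h i
      rw [if_pos hi] at this
      simpa using this
  rw [hset, Fintype.card_piFinset]
  have hcards : ∀ i : Fin n, ((if IsMin π i then ({0} : Finset (Fin 2)) else univ).card)
      = if IsMin π i then 1 else 2 := by
    intro i; by_cases hi : IsMin π i <;> simp [hi]
  rw [Finset.prod_congr rfl (fun i _ => hcards i), Finset.prod_ite,
    Finset.prod_const, Finset.prod_const, one_pow, one_mul]
  congr 1
  have hc := Finset.card_filter_add_card_filter_not
    (s := (univ : Finset (Fin n))) (fun i => IsMin π i)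
  rw [Finset.card_univ, Fintype.card_fin] at hc
  omega

end Count

end HafAux

open HafAux in
/-- For a symmetric `n × n` complex matrix `M`, the hafnian of the doubled matrix
`A((i,a),(j,b)) = M(i,j)` (indexed by `Fin n × Fin 2`, with the lexicographic order,
and given as the sum over all fixed-point-free involutions `σ` of `Fin n × Fin 2` of the
products of entries at the pairs `{p, σ(p)}` taken at the smaller element) equals the
2-determinant `det₂[M] = ∑_{π ∈ S_n} 2^{n − c(π)} ∏_i M(i, π(i))`, where `c(π)` is the
number of cycles of `π` including fixed points. -/
theorem hafnian_doubled_eq_det2 {n : ℕ} (hn : 1 ≤ n)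
    (M : Fin n → Fin n → ℂ) (hsym : ∀ i j, M i j = M j i) :
    (∑ σ ∈ univ.filter
        (fun σ : Equiv.Perm (Fin n × Fin 2) => σ * σ = 1 ∧ ∀ p, σ p ≠ p),
      ∏ p ∈ univ.filter
          (fun p : Fin n × Fin 2 => p.1 < (σ p).1 ∨ (p.1 = (σ p).1 ∧ p.2 < (σ p).2)),
        M p.1 (σ p).1)
    = ∑ π : Equiv.Perm (Fin n),
        (2 : ℂ) ^ (n - (π.cycleType.card + (univ.filter fun i => π i = i).card))
          * ∏ i : Fin n, M i (π i) := by
  classical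
  symm
  have hstep1 : ∀ π : Equiv.Perm (Fin n),
      (2 : ℂ) ^ (n - (π.cycleType.card + (univ.filter fun i => π i = i).card))
          * ∏ i : Fin n, M i (π i)
        = ∑ ε ∈ univ.filter (fun ε : Fin n → Fin 2 => ∀ i, IsMin π i → ε i = 0),
            ∏ i : Fin n, M i (π i) := by
    intro π
    rw [Finset.sum_const, card_epsSet π, card_minima π, nsmul_eq_mul]
    push_cast
    ring
  rw [Finset.sum_congr rfl (fun π _ => hstep1 π)]
  rw [Finset.sum_sigma' univ
    (fun π : Equiv.Perm (Fin n) =>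
      univ.filter (fun ε : Fin n → Fin 2 => ∀ i, IsMin π i → ε i = 0))
    (fun π ε => ∏ i : Fin n, M i (π i))]
  apply Finset.sum_bij
    (fun (x : Σ _ : Equiv.Perm (Fin n), Fin n → Fin 2) _ => dblInv x.1 x.2)
  · intro a _
    simp only [Finset.mem_filter, mem_univ, true_and]
    exact ⟨dblInv_mul_self a.1 a.2, dblInv_fpf a.1 a.2⟩
  · rintro ⟨π1, ε1⟩ h1 ⟨π2, ε2⟩ h2 h12
    have hc1 : ∀ i, IsMin π1 i → ε1 i = 0 := by
      have := (Finset.mem_sigma.mp h1).2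
      rw [Finset.mem_filter] at this
      exact this.2
    have hc2 : ∀ i, IsMin π2 i → ε2 i = 0 := by
      have := (Finset.mem_sigma.mp h2).2
      rw [Finset.mem_filter] at this
      exact this.2
    obtain ⟨hπ, hε⟩ := dblInv_injective π1 π2 ε1 ε2 hc1 hc2 h12
    subst hπ
    subst hε
    rfl
  · intro b hb
    rw [Finset.mem_filter] at hb
    obtain ⟨π, ε, hcon, heq⟩ := dblInv_surjective b hb.2.1 hb.2.2
    refine ⟨⟨π, ε⟩, ?_, heq⟩
    rw [Finset.mem_sigma]
    exact ⟨mem_univ _, Finset.mem_filter.mpr ⟨mem_univ _, hcon⟩⟩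
  · intro a _
    exact (prod_dblInv M hsym a.1 a.2).symm
end
end

section
/- Suppose the family (a⁺(φ))_{φ ∈ H} satisfies the CAR and the vacuum state τ is gauge-invariant and quasi-free. Then for all m, n ≥ 0 with m + n ≥ 1 and all φ₁, …, φ_m, ψ₁, …, ψ_n ∈ H: τ(a⁺(φ_m) ⋯ a⁺(φ₁) a⁻(ψ₁) ⋯ a⁻(ψ_n)) = 0 if m ≠ n, and τ(a⁺(φ_n) ⋯ a⁺(φ₁) a⁻(ψ₁) ⋯ a⁻(ψ_n)) = det[ τ(a⁺(φ_i) a⁻(ψ_j)) ]_{i,j = 1, …, n} if m = n. -/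
open Finset ContinuousLinearMap

/-- The number of crossings of the pair partition of `{0, …, N−1}` associated with a
fixed-point-free involution `σ`: the number of pairs `{i, σ i}`, `{l, σ l}` (written with
the smaller element first) such that `i < l < σ i < σ l`. -/
def crossingNumber {N : ℕ} (σ : Equiv.Perm (Fin N)) : ℕ :=
  (Finset.univ.filter
    (fun p : Fin N × Fin N => p.1 < p.2 ∧ p.2 < σ p.1 ∧ σ p.1 < σ p.2)).card

set_option linter.unusedSectionVars false
set_option linter.unnecessarySimpa false
set_option linter.unusedVariables false
set_option maxHeartbeats 1000000

namespace CARWick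

lemma prod_ite_neg_one {α : Type*} (s : Finset α) (p : α → Prop) [DecidablePred p] :
    (∏ x ∈ s, if p x then (-1 : ℤˣ) else 1) = (-1) ^ ((s.filter p).card) := by
  classical
  rw [← Finset.prod_filter_mul_prod_filter_not s p]
  have h1 : (∏ x ∈ s.filter p, if p x then (-1 : ℤˣ) else 1) = (-1) ^ ((s.filter p).card) := by
    rw [Finset.prod_congr rfl (fun x hx => if_pos (Finset.mem_filter.mp hx).2),
      Finset.prod_const]
  have h2 : (∏ x ∈ s.filter (fun x => ¬ p x), if p x then (-1 : ℤˣ) else 1) = 1 :=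
    Finset.prod_eq_one fun x hx => if_neg (Finset.mem_filter.mp hx).2
  rw [h1, h2, mul_one]

/-- number of inversions of a permutation of `Fin n` -/
def invCount {n : ℕ} (π : Equiv.Perm (Fin n)) : ℕ :=
  (Finset.univ.filter fun q : Fin n × Fin n => q.1 < q.2 ∧ π q.2 < π q.1).card

lemma sign_eq_signAux {n : ℕ} (π : Equiv.Perm (Fin n)) :
    Equiv.Perm.sign π = Equiv.Perm.signAux π := by
  refine Equiv.Perm.swap_induction_on π ?_ ?_
  · simp
  · intro f x y hxy ih
    rw [map_mul, Equiv.Perm.signAux_mul, ih, Equiv.Perm.sign_swap hxy,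
      Equiv.Perm.signAux_swap hxy]

lemma signAux_eq_pow_invCount {n : ℕ} (π : Equiv.Perm (Fin n)) :
    Equiv.Perm.signAux π = (-1) ^ invCount π := by
  rw [Equiv.Perm.signAux, prod_ite_neg_one]
  congr 1
  refine Finset.card_bij' (fun x _ => (x.2, x.1)) (fun q _ => ⟨q.2, q.1⟩) ?_ ?_ ?_ ?_
  · intro x hx
    obtain ⟨h1, h2⟩ := Finset.mem_filter.mp hx
    have hlt := Equiv.Perm.mem_finPairsLT.mp h1
    simp only [invCount, Finset.mem_filter, Finset.mem_univ, true_and]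
    exact ⟨hlt, lt_of_le_of_ne h2 (fun e => absurd (π.injective e) (ne_of_gt hlt))⟩
  · intro q hq
    obtain ⟨-, h1, h2⟩ := Finset.mem_filter.mp hq
    refine Finset.mem_filter.mpr ⟨Equiv.Perm.mem_finPairsLT.mpr h1, le_of_lt h2⟩
  · intro x _; rfl
  · intro q _; rfl

lemma sign_eq_pow_invCount {n : ℕ} (π : Equiv.Perm (Fin n)) :
    ((Equiv.Perm.sign π : ℤ) : ℂ) = (-1) ^ invCount π := by
  rw [sign_eq_signAux, signAux_eq_pow_invCount]
  push_cast
  norm_num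





def nonInv {n : ℕ} (π : Equiv.Perm (Fin n)) : ℕ :=
  (Finset.univ.filter fun q : Fin n × Fin n => q.1 < q.2 ∧ π q.1 < π q.2).card

lemma fin_sum_cases {n : ℕ} (x : Fin (n + n)) :
    (∃ i : Fin n, x = Fin.castAdd n i) ∨ (∃ j : Fin n, x = Fin.natAdd n j) := by
  by_cases h : (x : ℕ) < n
  · exact Or.inl ⟨⟨(x : ℕ), h⟩, by apply Fin.ext; simp⟩
  · exact Or.inr ⟨⟨(x : ℕ) - n, by have := x.isLt; omega⟩, by apply Fin.ext; simp; omega⟩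

def iotaFun {n : ℕ} (π : Equiv.Perm (Fin n)) : Fin (n + n) → Fin (n + n) := fun x =>
  if h : (x : ℕ) < n then Fin.natAdd n (π ⟨(x : ℕ), h⟩)
  else Fin.castAdd n (π.symm ⟨(x : ℕ) - n, by have := x.isLt; omega⟩)

lemma iotaFun_castAdd {n : ℕ} (π : Equiv.Perm (Fin n)) (i : Fin n) :
    iotaFun π (Fin.castAdd n i) = Fin.natAdd n (π i) := by
  rw [iotaFun, dif_pos (by simpa using i.isLt)]
  congr 1

lemma iotaFun_natAdd {n : ℕ} (π : Equiv.Perm (Fin n)) (j : Fin n) :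
    iotaFun π (Fin.natAdd n j) = Fin.castAdd n (π.symm j) := by
  rw [iotaFun, dif_neg (by simp)]
  congr 1
  apply congrArg
  apply Fin.ext
  simp

lemma iotaFun_invol {n : ℕ} (π : Equiv.Perm (Fin n)) : Function.Involutive (iotaFun π) := by
  intro x
  rcases fin_sum_cases x with ⟨i, rfl⟩ | ⟨j, rfl⟩
  · rw [iotaFun_castAdd, iotaFun_natAdd, Equiv.symm_apply_apply]
  · rw [iotaFun_natAdd, iotaFun_castAdd, Equiv.apply_symm_apply]

def iota {n : ℕ} (π : Equiv.Perm (Fin n)) : Equiv.Perm (Fin (n + n)) :=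
  Function.Involutive.toPerm (iotaFun π) (iotaFun_invol π)

lemma iota_castAdd {n : ℕ} (π : Equiv.Perm (Fin n)) (i : Fin n) :
    iota π (Fin.castAdd n i) = Fin.natAdd n (π i) := iotaFun_castAdd π i

lemma iota_natAdd {n : ℕ} (π : Equiv.Perm (Fin n)) (j : Fin n) :
    iota π (Fin.natAdd n j) = Fin.castAdd n (π.symm j) := iotaFun_natAdd π j

lemma iota_sq {n : ℕ} (π : Equiv.Perm (Fin n)) : iota π * iota π = 1 := by
  apply Equiv.ext
  intro x
  rw [Equiv.Perm.mul_apply, Equiv.Perm.one_apply]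
  exact iotaFun_invol π x

lemma iota_fixfree {n : ℕ} (π : Equiv.Perm (Fin n)) (i : Fin (n + n)) : iota π i ≠ i := by
  rcases fin_sum_cases i with ⟨i, rfl⟩ | ⟨j, rfl⟩
  · rw [iota_castAdd]
    intro e
    have := congrArg Fin.val e
    simp only [Fin.coe_natAdd, Fin.coe_castAdd] at this
    have := i.isLt
    omega
  · rw [iota_natAdd]
    intro e
    have := congrArg Fin.val e
    simp only [Fin.coe_natAdd, Fin.coe_castAdd] at this
    have := (π.symm j).isLt
    omega

lemma iota_inj {n : ℕ} : Function.Injective (iota (n := n)) := by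
  intro π π' h
  apply Equiv.ext
  intro i
  have h1 := iota_castAdd π i
  have h2 := iota_castAdd π' i
  rw [h, h2] at h1
  have := congrArg Fin.val h1
  simp only [Fin.coe_natAdd] at this
  apply Fin.ext
  omega

lemma iota_filter_lt {n : ℕ} (π : Equiv.Perm (Fin n)) :
    univ.filter (fun x : Fin (n + n) => x < iota π x)
      = univ.filter (fun x : Fin (n + n) => (x : ℕ) < n) := by
  apply Finset.ext
  intro x
  simp only [Finset.mem_filter, Finset.mem_univ, true_and, Fin.lt_def]
  rcases fin_sum_cases x with ⟨i, rfl⟩ | ⟨j, rfl⟩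
  · rw [iota_castAdd]
    simp only [Fin.coe_natAdd, Fin.coe_castAdd]
    have := i.isLt
    have := (π i).isLt
    constructor <;> (intro; omega)
  · rw [iota_natAdd]
    simp only [Fin.coe_natAdd, Fin.coe_castAdd]
    have := (π.symm j).isLt
    constructor <;> (intro; omega)

lemma crossing_iota {n : ℕ} (π : Equiv.Perm (Fin n)) :
    crossingNumber (iota π) = nonInv π := by
  rw [crossingNumber, nonInv]
  have himg : (Finset.univ.filter
      (fun p : Fin (n+n) × Fin (n+n) => p.1 < p.2 ∧ p.2 < iota π p.1 ∧ iota π p.1 < iota π p.2))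
      = Finset.image (fun q : Fin n × Fin n => (Fin.castAdd n q.1, Fin.castAdd n q.2))
        (Finset.univ.filter fun q : Fin n × Fin n => q.1 < q.2 ∧ π q.1 < π q.2) := by
    apply Finset.ext
    intro p
    simp only [Finset.mem_filter, Finset.mem_univ, true_and, Finset.mem_image]
    constructor
    · rintro ⟨h1, h2, h3⟩
      rcases fin_sum_cases p.1 with ⟨i, hi⟩ | ⟨j, hj⟩
      · rcases fin_sum_cases p.2 with ⟨i2, hi2⟩ | ⟨j2, hj2⟩
        · refine ⟨(i, i2), ⟨?_, ?_⟩, ?_⟩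
          · rw [hi, hi2] at h1
            rw [Fin.lt_def] at h1 ⊢
            simpa using h1
          · rw [hi, hi2, iota_castAdd, iota_castAdd] at h3
            rw [Fin.lt_def] at h3 ⊢
            simpa using h3
          · exact Prod.ext hi.symm hi2.symm
        · exfalso
          rw [hi, hj2, iota_castAdd, iota_natAdd] at h3
          rw [Fin.lt_def] at h3
          simp only [Fin.coe_natAdd, Fin.coe_castAdd] at h3
          have := (π.symm j2).isLt
          omega
      · exfalso
        rw [hj, iota_natAdd] at h2
        rw [hj] at h1
        rw [Fin.lt_def] at h1 h2
        simp only [Fin.coe_natAdd, Fin.coe_castAdd] at h1 h2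
        have := (π.symm j).isLt
        omega
    · rintro ⟨q, ⟨hq1, hq2⟩, rfl⟩
      rw [iota_castAdd, iota_castAdd]
      rw [Fin.lt_def] at hq1 hq2 ⊢
      refine ⟨by simpa using hq1, ?_, ?_⟩
      · rw [Fin.lt_def]
        simp only [Fin.coe_natAdd, Fin.coe_castAdd]
        have := q.2.isLt
        omega
      · rw [Fin.lt_def]
        simpa using hq2
  rw [himg, Finset.card_image_of_injective]
  intro q q' e
  simp only [Prod.mk.injEq] at e
  have e1 := congrArg Fin.val e.1
  have e2 := congrArg Fin.val e.2
  simp only [Fin.coe_castAdd] at e1 e2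
  exact Prod.ext (Fin.ext e1) (Fin.ext e2)

lemma nonInv_rev {n : ℕ} (ρ : Equiv.Perm (Fin n)) :
    nonInv (ρ * Fin.revPerm) = invCount ρ := by
  rw [nonInv, invCount]
  have himg : (Finset.univ.filter fun q : Fin n × Fin n =>
        q.1 < q.2 ∧ (ρ * Fin.revPerm : Equiv.Perm (Fin n)) q.1 < (ρ * Fin.revPerm : Equiv.Perm (Fin n)) q.2)
      = Finset.image (fun q : Fin n × Fin n => (Fin.rev q.2, Fin.rev q.1))
        (Finset.univ.filter fun q : Fin n × Fin n => q.1 < q.2 ∧ ρ q.2 < ρ q.1) := by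
    apply Finset.ext
    intro p
    simp only [Finset.mem_filter, Finset.mem_univ, true_and, Finset.mem_image,
      Equiv.Perm.mul_apply, Fin.revPerm_apply]
    constructor
    · rintro ⟨h1, h2⟩
      refine ⟨(Fin.rev p.2, Fin.rev p.1), ⟨?_, ?_⟩, ?_⟩
      · simpa using Fin.rev_lt_rev.mpr h1
      · simpa [Fin.rev_rev] using h2
      · simp [Fin.rev_rev]
    · rintro ⟨q, ⟨hq1, hq2⟩, rfl⟩
      refine ⟨by simpa using Fin.rev_lt_rev.mpr hq1, by simpa [Fin.rev_rev] using hq2⟩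
  rw [himg, Finset.card_image_of_injective]
  intro q q' e
  simp only [Prod.mk.injEq] at e
  exact Prod.ext (Fin.rev_injective e.2) (Fin.rev_injective e.1)

section Balance

lemma sigma_lt_block {m n : ℕ} (σ : Equiv.Perm (Fin (m + n))) (hσσ : ∀ x, σ (σ x) = x)
    (hfix : ∀ i, σ i ≠ i)
    (hAC : ∀ i, i < σ i → ((i : ℕ) < m ∧ m ≤ (σ i : ℕ))) :
    ∀ x : Fin (m + n), ((x : ℕ) < m → m ≤ (σ x : ℕ)) ∧ (m ≤ (x : ℕ) → (σ x : ℕ) < m) := by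
  intro x
  constructor
  · intro hx
    rcases (hfix x).lt_or_gt with h | h
    · exfalso
      have := hAC (σ x) (by rw [hσσ]; exact h)
      rw [hσσ] at this
      omega
    · exact (hAC x h).2
  · intro hx
    rcases (hfix x).lt_or_gt with h | h
    · have := hAC (σ x) (by rw [hσσ]; exact h)
      exact this.1
    · exact absurd (hAC x h).1 (by omega)

lemma balance {m n : ℕ} (σ : Equiv.Perm (Fin (m + n))) (hσσ : ∀ x, σ (σ x) = x)
    (hfix : ∀ i, σ i ≠ i)
    (hAC : ∀ i, i < σ i → ((i : ℕ) < m ∧ m ≤ (σ i : ℕ))) : m = n := by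
  have hb := sigma_lt_block σ hσσ hfix hAC
  have h1 : Function.Injective (fun i : Fin m =>
      (⟨(σ (Fin.castAdd n i) : ℕ) - m, by
        have h := (hb (Fin.castAdd n i)).1 (by simp)
        have := (σ (Fin.castAdd n i)).isLt
        omega⟩ : Fin n)) := by
    intro i i' e
    have e' := congrArg Fin.val e
    simp only at e'
    have g1 := (hb (Fin.castAdd n i)).1 (by simp)
    have g2 := (hb (Fin.castAdd n i')).1 (by simp)
    have : σ (Fin.castAdd n i) = σ (Fin.castAdd n i') := Fin.ext (by omega)
    have := σ.injective this
    have := congrArg Fin.val this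
    simp only [Fin.coe_castAdd] at this
    exact Fin.ext this
  have h2 : Function.Injective (fun j : Fin n =>
      (⟨(σ (Fin.natAdd m j) : ℕ), by
        exact (hb (Fin.natAdd m j)).2 (by simp)⟩ : Fin m)) := by
    intro j j' e
    have e' := congrArg Fin.val e
    simp only at e'
    have : σ (Fin.natAdd m j) = σ (Fin.natAdd m j') := Fin.ext e'
    have := σ.injective this
    have := congrArg Fin.val this
    simp only [Fin.coe_natAdd] at this
    exact Fin.ext (by omega)
  have c1 := Fintype.card_le_of_injective _ h1
  have c2 := Fintype.card_le_of_injective _ h2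
  simp only [Fintype.card_fin] at c1 c2
  omega

end Balance

lemma iota_surj {n : ℕ} (σ : Equiv.Perm (Fin (n + n))) (hσσ : ∀ x, σ (σ x) = x)
    (hfix : ∀ i, σ i ≠ i)
    (hAC : ∀ i, i < σ i → ((i : ℕ) < n ∧ n ≤ (σ i : ℕ))) : ∃ π, iota π = σ := by
  have hb := sigma_lt_block σ hσσ hfix hAC
  set p : Fin n → Fin n := fun i =>
    (⟨(σ (Fin.castAdd n i) : ℕ) - n, by
      have h := (hb (Fin.castAdd n i)).1 (by simp)
      have := (σ (Fin.castAdd n i)).isLt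
      omega⟩ : Fin n) with hp
  have hpinj : Function.Injective p := by
    intro i i' e
    have e' := congrArg Fin.val e
    simp only [hp] at e'
    have g1 := (hb (Fin.castAdd n i)).1 (by simp)
    have g2 := (hb (Fin.castAdd n i')).1 (by simp)
    have : σ (Fin.castAdd n i) = σ (Fin.castAdd n i') := Fin.ext (by omega)
    have := σ.injective this
    have := congrArg Fin.val this
    simp only [Fin.coe_castAdd] at this
    exact Fin.ext this
  set π : Equiv.Perm (Fin n) := Equiv.ofBijective p (Finite.injective_iff_bijective.mp hpinj)
    with hπ
  have hπapp : ∀ i, π i = p i := fun i => rfl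
  refine ⟨π, ?_⟩
  apply Equiv.ext
  intro x
  rcases fin_sum_cases x with ⟨i, rfl⟩ | ⟨j, rfl⟩
  · rw [iota_castAdd, hπapp]
    apply Fin.ext
    have h := (hb (Fin.castAdd n i)).1 (by simp)
    simp only [Fin.coe_natAdd, hp]
    omega
  · rw [iota_natAdd]
    set y := σ (Fin.natAdd n j) with hy
    have hyn : (y : ℕ) < n := (hb (Fin.natAdd n j)).2 (by simp)
    have hcy : Fin.castAdd n (⟨(y : ℕ), hyn⟩ : Fin n) = y := Fin.ext (by simp)
    have hpy : p ⟨(y : ℕ), hyn⟩ = j := by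
      apply Fin.ext
      simp only [hp]
      rw [hcy, hy, hσσ]
      simp
    have : π.symm j = ⟨(y : ℕ), hyn⟩ := by
      rw [Equiv.symm_apply_eq, hπapp, hpy]
    rw [this, hcy]




variable {H F : Type*}
  [NormedAddCommGroup H] [InnerProductSpace ℂ H] [CompleteSpace H]
  [NormedAddCommGroup F] [InnerProductSpace ℂ F] [CompleteSpace F]

noncomputable def cOp (a : H →ₗ[ℂ] (F →L[ℂ] F)) (v : H × H) : F →L[ℂ] F :=
  a v.1 + adjoint (a v.2)

def Jsm (x : H × H) : H × H := (Complex.I • x.1, -(Complex.I • x.2))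

lemma cOp_pair_left (a : H →ₗ[ℂ] (F →L[ℂ] F)) (x : H) : cOp a (x, 0) = a x := by
  simp [cOp, map_zero]

lemma cOp_pair_right (a : H →ₗ[ℂ] (F →L[ℂ] F)) (y : H) : cOp a (0, y) = adjoint (a y) := by
  simp [cOp, map_zero]

lemma cOp_dec (a : H →ₗ[ℂ] (F →L[ℂ] F)) (d1 d2 : H × H) :
    cOp a (d1 + Jsm d2) = cOp a d1 + Complex.I • cOp a d2 := by
  have h1 : (d1 + Jsm d2).1 = d1.1 + Complex.I • d2.1 := rfl
  have h2 : (d1 + Jsm d2).2 = d1.2 + (-(Complex.I • d2.2)) := rfl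
  simp only [cOp, h1, h2, map_add, map_smul, map_neg, map_smulₛₗ, Complex.conj_I,
    neg_smul, neg_neg, smul_add]
  abel

variable (a : H →ₗ[ℂ] (F →L[ℂ] F)) (τ : (F →L[ℂ] F) → ℂ)

/-- mixed moments of generalized field operators -/
noncomputable def GG {N : ℕ} (v : Fin N → H × H) : ℂ :=
  τ ((List.ofFn fun i => cOp a (v i)).prod)

/-- two point function -/
noncomputable def W2 (x y : H × H) : ℂ := τ (cOp a x * cOp a y)

/-- Wick pairing sum -/
noncomputable def WK {N : ℕ} (v : Fin N → H × H) : ℂ :=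
  ∑ σ ∈ univ.filter (fun σ : Equiv.Perm (Fin N) => σ * σ = 1 ∧ ∀ i, σ i ≠ i),
    (-1 : ℂ) ^ crossingNumber σ *
      ∏ i ∈ univ.filter (fun i => i < σ i), W2 a τ (v i) (v (σ i))

lemma ofFn_update {M : Type*} {N : ℕ} (g : (H × H) → M) (v : Fin N → H × H) (k : Fin N)
    (x : H × H) :
    List.ofFn (fun i => g (Function.update v k x i)) = (List.ofFn fun i => g (v i)).set k (g x) := by
  apply List.ext_getElem
  · simp
  · intro i h1 h2
    simp only [List.getElem_set, List.getElem_ofFn, Function.update]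
    have h3 : i < N := by simpa using h1
    by_cases hik : (⟨i, h3⟩ : Fin N) = k
    · rw [if_pos (by simpa [Fin.ext_iff] using hik.symm)]
      simp [hik]
    · rw [if_neg (by simpa [Fin.ext_iff, eq_comm] using hik)]
      simp [hik]

lemma sq_apply {N : ℕ} {σ : Equiv.Perm (Fin N)} (h : σ * σ = 1) (x : Fin N) : σ (σ x) = x := by
  have := congrArg (fun p : Equiv.Perm (Fin N) => p x) h
  simpa [Equiv.Perm.mul_apply] using this


variable (hadd : ∀ A B, τ (A + B) = τ A + τ B) (hsmul : ∀ (c : ℂ) A, τ (c • A) = c * τ A)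

include hadd hsmul

lemma GG_slot {N : ℕ} (v : Fin N → H × H) (k : Fin N) (d1 d2 : H × H) :
    GG a τ (Function.update v k (d1 + Jsm d2))
      = GG a τ (Function.update v k d1) + Complex.I * GG a τ (Function.update v k d2) := by
  unfold GG
  rw [ofFn_update, ofFn_update, ofFn_update, List.prod_set, List.prod_set, List.prod_set]
  have hk : (k : ℕ) < (List.ofFn fun i => cOp a (v i)).length := by
    simpa using k.isLt
  rw [if_pos hk, if_pos hk, if_pos hk, cOp_dec]
  rw [mul_add, add_mul, hadd, mul_smul_comm, smul_mul_assoc, hsmul]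

lemma W2_dec_left (d1 d2 y : H × H) :
    W2 a τ (d1 + Jsm d2) y = W2 a τ d1 y + Complex.I * W2 a τ d2 y := by
  unfold W2
  rw [cOp_dec, add_mul, hadd, smul_mul_assoc, hsmul]

lemma W2_dec_right (x d1 d2 : H × H) :
    W2 a τ x (d1 + Jsm d2) = W2 a τ x d1 + Complex.I * W2 a τ x d2 := by
  unfold W2
  rw [cOp_dec, mul_add, hadd, mul_smul_comm, hsmul]


lemma WK_slot {N : ℕ} (v : Fin N → H × H) (k : Fin N) (d1 d2 : H × H) :
    WK a τ (Function.update v k (d1 + Jsm d2))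
      = WK a τ (Function.update v k d1) + Complex.I * WK a τ (Function.update v k d2) := by
  classical
  unfold WK
  rw [Finset.mul_sum, ← Finset.sum_add_distrib]
  refine Finset.sum_congr rfl ?_
  intro σ hσ
  obtain ⟨hinv, hfix⟩ := (Finset.mem_filter.mp hσ).2
  have hσσ : ∀ x, σ (σ x) = x := sq_apply hinv
  by_cases hk : k < σ k
  · have hmem : k ∈ univ.filter (fun i => i < σ i) := by simp [hk]
    rw [← Finset.mul_prod_erase _ _ hmem, ← Finset.mul_prod_erase _ _ hmem,
      ← Finset.mul_prod_erase _ _ hmem]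
    have herase : ∀ z : H × H, ∀ i ∈ (univ.filter (fun i => i < σ i)).erase k,
        W2 a τ (Function.update v k z i) (Function.update v k z (σ i))
          = W2 a τ (v i) (v (σ i)) := by
      intro z i hi
      obtain ⟨hik, hifil⟩ := Finset.mem_erase.mp hi
      have hilt : i < σ i := by simpa using hifil
      have hσik : σ i ≠ k := by
        intro e
        have hiσk : σ k = i := by rw [← e, hσσ]
        rw [e] at hilt
        rw [hiσk] at hk
        exact absurd (hilt.trans hk) (lt_irrefl i)
      rw [Function.update_of_ne hik, Function.update_of_ne hσik]
    rw [Finset.prod_congr rfl (herase _), Finset.prod_congr rfl (herase _),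
      Finset.prod_congr rfl (herase _)]
    have hne : σ k ≠ k := hfix k
    rw [Function.update_self, Function.update_self, Function.update_self,
      Function.update_of_ne hne, Function.update_of_ne hne, Function.update_of_ne hne,
      W2_dec_left a τ hadd hsmul]
    ring
  · have hlt : σ k < k := lt_of_le_of_ne (not_lt.mp hk) (hfix k)
    have hmem : σ k ∈ univ.filter (fun i => i < σ i) := by
      simp only [Finset.mem_filter, Finset.mem_univ, true_and]
      rw [hσσ k]; exact hlt
    rw [← Finset.mul_prod_erase _ _ hmem, ← Finset.mul_prod_erase _ _ hmem,
      ← Finset.mul_prod_erase _ _ hmem]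
    have herase : ∀ z : H × H, ∀ i ∈ (univ.filter (fun i => i < σ i)).erase (σ k),
        W2 a τ (Function.update v k z i) (Function.update v k z (σ i))
          = W2 a τ (v i) (v (σ i)) := by
      intro z i hi
      obtain ⟨hiσk, hifil⟩ := Finset.mem_erase.mp hi
      have hilt : i < σ i := by simpa using hifil
      have hik : i ≠ k := by
        intro e; rw [e] at hilt; exact hk hilt
      have hσik : σ i ≠ k := by
        intro e
        exact hiσk (by rw [← e, hσσ])
      rw [Function.update_of_ne hik, Function.update_of_ne hσik]
    rw [Finset.prod_congr rfl (herase _), Finset.prod_congr rfl (herase _),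
      Finset.prod_congr rfl (herase _)]
    have hne : σ k ≠ k := hfix k
    rw [Function.update_of_ne hne, Function.update_of_ne hne, Function.update_of_ne hne,
      hσσ k, Function.update_self, Function.update_self, Function.update_self,
      W2_dec_right a τ hadd hsmul]
    ring

lemma extend {N : ℕ} (Z : (Fin N → H × H) → ℂ)
    (hZ : ∀ (v : Fin N → H × H) (k : Fin N) (d1 d2 : H × H),
      Z (Function.update v k (d1 + Jsm d2))
        = Z (Function.update v k d1) + Complex.I * Z (Function.update v k d2))
    (hdiag : ∀ χ : Fin N → H, GG a τ (fun i => (χ i, χ i)) = Z (fun i => (χ i, χ i))) :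
    ∀ v, GG a τ v = Z v := by
  classical
  suffices h : ∀ s : Finset (Fin N), ∀ v : Fin N → H × H,
      (∀ i, i ∉ s → (v i).2 = (v i).1) → GG a τ v = Z v by
    exact fun v => h Finset.univ v (by simp)
  intro s
  induction s using Finset.induction_on with
  | empty =>
    intro v hv
    have hveq : v = fun i => ((v i).1, (v i).1) :=
      funext fun i => Prod.ext rfl (hv i (by simp))
    rw [hveq]
    exact hdiag fun i => (v i).1
  | @insert j s hj ih =>
    intro v hv
    set x : H := (v j).1 with hx
    set y : H := (v j).2 with hy
    set d1 : H × H := ((2⁻¹ : ℂ) • (x + y), (2⁻¹ : ℂ) • (x + y)) with hd1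
    set w : H := (-Complex.I * 2⁻¹) • (x - y) with hw
    have hc : Complex.I * (-Complex.I * 2⁻¹) = 2⁻¹ := by
      rw [show Complex.I * (-Complex.I * 2⁻¹) = -(Complex.I * Complex.I) * 2⁻¹ from by ring,
        Complex.I_mul_I]
      norm_num
    have hdec : v j = d1 + Jsm (w, w) := by
      apply Prod.ext
      · show x = (2⁻¹ : ℂ) • (x + y) + Complex.I • w
        rw [hw, smul_smul, hc]
        module
      · show y = (2⁻¹ : ℂ) • (x + y) + -(Complex.I • w)
        rw [hw, smul_smul, hc]
        module
    have key := hZ v j d1 (w, w)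
    have keyG := GG_slot a τ hadd hsmul v j d1 (w, w)
    rw [← hdec, Function.update_eq_self] at key keyG
    have cond : ∀ z : H × H, z.2 = z.1 → ∀ i, i ∉ s →
        ((Function.update v j z i).2 = (Function.update v j z i).1) := by
      intro z hz i his
      by_cases hij : i = j
      · rw [hij, Function.update_self]; exact hz
      · rw [Function.update_of_ne hij]
        exact hv i (by simp [hij, his])
    rw [keyG, key, ih _ (cond d1 rfl), ih _ (cond (w, w) rfl)]






end CARWick

/-- If `(a⁺(φ))_{φ ∈ H}` satisfies the CAR and the vacuum state
`τ(A) = ⟨AΩ, Ω⟩` is gauge-invariant and quasi-free, then the `n`-point functions satisfy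
`τ(a⁺(φ_m)⋯a⁺(φ₁)a⁻(ψ₁)⋯a⁻(ψ_n)) = 0` for `m ≠ n`, and
`τ(a⁺(φ_n)⋯a⁺(φ₁)a⁻(ψ₁)⋯a⁻(ψ_n)) = det [τ(a⁺(φ_i)a⁻(ψ_j))]_{i,j=1,…,n}`.
Inner products `⟨x, y⟩` and `(ψ, φ)_H` are linear in the first and conjugate-linear in the
second argument, hence equal to Mathlib's `⟪y, x⟫`. -/
theorem car_gauge_invariant_quasi_free_n_point_functions {H F : Type*}
    [NormedAddCommGroup H] [InnerProductSpace ℂ H] [CompleteSpace H]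
    [NormedAddCommGroup F] [InnerProductSpace ℂ F] [CompleteSpace F] [Nontrivial F]
    (a : H →ₗ[ℂ] (F →L[ℂ] F))
    (hCAR₁ : ∀ φ ψ : H, a φ * a ψ + a ψ * a φ = 0)
    (hCAR₂ : ∀ φ ψ : H, adjoint (a φ) * adjoint (a ψ) + adjoint (a ψ) * adjoint (a φ) = 0)
    (hCAR₃ : ∀ φ ψ : H,
      adjoint (a φ) * a ψ + a ψ * adjoint (a φ) = (inner ℂ φ ψ : ℂ) • (1 : F →L[ℂ] F))
    (Ω : F) (hΩ : ‖Ω‖ = 1)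
    (τ : (F →L[ℂ] F) → ℂ) (hτ : ∀ A, τ A = (inner ℂ Ω (A Ω) : ℂ))
    (b : H → (F →L[ℂ] F)) (hb : ∀ φ, b φ = a φ + adjoint (a φ))
    (T : (n : ℕ) → (Fin n → H) → ℂ)
    (hT : ∀ (n : ℕ) (φ : Fin n → H), T n φ = τ (List.ofFn (fun i => b (φ i))).prod)
    -- quasi-freeness: odd moments vanish
    (hodd : ∀ (n : ℕ) (φ : Fin (2 * n + 1) → H), T (2 * n + 1) φ = 0)
    -- quasi-freeness: even moments are sums over pair partitions with crossing signs
    (heven : ∀ (n : ℕ), 1 ≤ n → ∀ φ : Fin (2 * n) → H,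
      T (2 * n) φ = ∑ σ ∈ univ.filter
          (fun σ : Equiv.Perm (Fin (2 * n)) => σ * σ = 1 ∧ ∀ i, σ i ≠ i),
        (-1 : ℂ) ^ crossingNumber σ *
          ∏ i ∈ univ.filter (fun i => i < σ i), T 2 ![φ i, φ (σ i)])
    -- gauge invariance
    (hgauge : ∀ q : ℂ, ‖q‖ = 1 → ∀ (n : ℕ) (φ : Fin n → H),
      T n (fun i => q • φ i) = T n φ) :
    (∀ m n : ℕ, 1 ≤ m + n → m ≠ n → ∀ (φ : Fin m → H) (ψ : Fin n → H),
      τ ((List.ofFn (fun i : Fin m => a (φ i.rev))).prod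
        * (List.ofFn (fun j : Fin n => adjoint (a (ψ j)))).prod) = 0)
    ∧ (∀ n : ℕ, 1 ≤ n → ∀ φ ψ : Fin n → H,
      τ ((List.ofFn (fun i : Fin n => a (φ i.rev))).prod
          * (List.ofFn (fun j : Fin n => adjoint (a (ψ j)))).prod)
        = Matrix.det (Matrix.of fun i j : Fin n => τ (a (φ i) * adjoint (a (ψ j))))) := by
  classical
  have τadd : ∀ A B, τ (A + B) = τ A + τ B := by
    intro A B; simp [hτ, ContinuousLinearMap.add_apply, inner_add_right]
  have τsmul : ∀ (c : ℂ) A, τ (c • A) = c * τ A := by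
    intro c A; simp [hτ, ContinuousLinearMap.smul_apply, inner_smul_right]
  have hadj : ∀ (c : ℂ) (A : F →L[ℂ] F), adjoint (c • A) = (starRingEnd ℂ c) • adjoint A :=
    fun c A => map_smulₛₗ adjoint c A
  have hbs : ∀ x : H, b x = CARWick.cOp a (x, x) := by
    intro x; rw [hb]; rfl
  have hT2 : ∀ x y : H, T 2 ![x, y] = τ (b x * b y) := by
    intro x y
    rw [hT]
    have : (List.ofFn fun i => b (![x, y] i)).prod = b x * b y := by
      simp [List.ofFn_succ]
    rw [this]
  -- gauge invariance consequences
  have expand : ∀ (q : ℂ) (x y : H), τ (b (q • x) * b (q • y)) =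
      q ^ 2 * τ (a x * a y) + (q * (starRingEnd ℂ q)) * τ (a x * adjoint (a y))
      + ((starRingEnd ℂ q) * q) * τ (adjoint (a x) * a y)
      + (starRingEnd ℂ q) ^ 2 * τ (adjoint (a x) * adjoint (a y)) := by
    intro q x y
    rw [hb, hb, map_smul a q x, map_smul a q y, hadj, hadj]
    rw [add_mul, mul_add, mul_add]
    rw [smul_mul_assoc, smul_mul_assoc, smul_mul_assoc, smul_mul_assoc,
      mul_smul_comm, mul_smul_comm, mul_smul_comm, mul_smul_comm]
    rw [τadd, τadd, τadd, τsmul, τsmul, τsmul, τsmul, τsmul, τsmul, τsmul, τsmul]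
    ring
  have hPQ : ∀ x y : H, τ (a x * a y) = 0 ∧ τ (adjoint (a x) * adjoint (a y)) = 0 := by
    intro x y
    set Pv := τ (a x * a y) with hPv
    set Sv := τ (a x * adjoint (a y)) with hSv
    set Rv := τ (adjoint (a x) * a y) with hRv
    set Qv := τ (adjoint (a x) * adjoint (a y)) with hQv
    have harg : ∀ (q : ℂ), (fun i => q • (![x, y] i)) = ![q • x, q • y] := by
      intro q; funext i; fin_cases i <;> simp
    have E0 : τ (b x * b y) = Pv + Sv + Rv + Qv := by
      have := expand 1 x y
      simp only [one_smul, map_one, one_mul, one_pow] at this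
      linear_combination this
    have g1 := hgauge Complex.I (by simp) 2 ![x, y]
    rw [harg, hT2, hT2] at g1
    have E1 : τ (b (Complex.I • x) * b (Complex.I • y)) = -Pv + Sv + Rv - Qv := by
      rw [expand, Complex.conj_I]
      linear_combination (Pv - Sv - Rv + Qv) * Complex.I_sq
    set q0 := Complex.exp ((Real.pi/4 : ℝ) * Complex.I) with hq0def
    have hq0n : ‖q0‖ = 1 := by
      rw [hq0def]
      exact Complex.norm_exp_ofReal_mul_I _
    have hq0sq : q0 ^ 2 = Complex.I := by
      rw [hq0def, sq, ← Complex.exp_add]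
      have : (↑(Real.pi/4) : ℂ) * Complex.I + ↑(Real.pi/4) * Complex.I
          = ↑(Real.pi/2) * Complex.I := by push_cast; ring
      rw [this, Complex.exp_mul_I, ← Complex.ofReal_cos, ← Complex.ofReal_sin,
        Real.cos_pi_div_two, Real.sin_pi_div_two]
      simp
    have hq0c : (starRingEnd ℂ q0) ^ 2 = -Complex.I := by
      rw [← map_pow, hq0sq, Complex.conj_I]
    have hq0m : q0 * (starRingEnd ℂ) q0 = 1 := by
      rw [Complex.mul_conj, Complex.normSq_eq_norm_sq, hq0n]
      norm_num
    have hq0m' : (starRingEnd ℂ) q0 * q0 = 1 := by rw [mul_comm]; exact hq0m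
    have g2 := hgauge q0 hq0n 2 ![x, y]
    rw [harg, hT2, hT2] at g2
    have E2 : τ (b (q0 • x) * b (q0 • y))
        = Complex.I * Pv + Sv + Rv + (-Complex.I) * Qv := by
      rw [expand, hq0sq, hq0m, hq0m', hq0c]
      ring
    rw [E1, E0] at g1
    rw [E2, E0] at g2
    have h1 : Pv + Qv = 0 := by linear_combination (-1/2 : ℂ) * g1
    have h3 : Complex.I * (Pv - Qv) = 0 := by linear_combination g2 + h1
    have h4 : Pv - Qv = 0 := by
      rcases mul_eq_zero.mp h3 with h | h
      · exact absurd h Complex.I_ne_zero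
      · exact h
    constructor
    · linear_combination (h1 + h4) / 2
    · linear_combination (h1 - h4) / 2
  -- Wick theorems via the extension lemma
  have hGGdiag : ∀ (N : ℕ) (χ : Fin N → H),
      CARWick.GG a τ (fun i => (χ i, χ i)) = T N χ := by
    intro N χ
    rw [hT]
    unfold CARWick.GG
    have e : (fun i => CARWick.cOp a ((fun i => (χ i, χ i)) i)) = fun i => b (χ i) :=
      funext fun i => (hbs (χ i)).symm
    rw [e]
  have wick_odd : ∀ (N k : ℕ), N = 2 * k + 1 → ∀ v : Fin N → H × H,
      CARWick.GG a τ v = 0 := by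
    intro N k hN
    refine CARWick.extend a τ τadd τsmul (fun _ => 0) (fun v j d1 d2 => by simp) ?_
    intro χ
    rw [hGGdiag]
    subst hN
    exact hodd k χ
  have wick_even : ∀ (N p : ℕ), N = 2 * p → 1 ≤ p → ∀ v : Fin N → H × H,
      CARWick.GG a τ v = CARWick.WK a τ v := by
    intro N p hN hp
    subst hN
    refine CARWick.extend a τ τadd τsmul (CARWick.WK a τ)
      (fun v j d1 d2 => CARWick.WK_slot a τ τadd τsmul v j d1 d2) ?_
    intro χ
    rw [hGGdiag, heven p hp χ]
    unfold CARWick.WK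
    refine Finset.sum_congr rfl ?_
    intro σ hσ
    congr 1
    refine Finset.prod_congr rfl ?_
    intro i hi
    rw [hT2]
    unfold CARWick.W2
    rw [hbs, hbs]
  -- reduction of the mixed moment to GG
  have hGGprod : ∀ (m n : ℕ) (φ : Fin m → H) (ψ : Fin n → H),
      τ ((List.ofFn (fun i : Fin m => a (φ i.rev))).prod
        * (List.ofFn (fun j : Fin n => adjoint (a (ψ j)))).prod)
      = CARWick.GG a τ
          (Fin.append (fun i : Fin m => ((φ i.rev : H), (0 : H)))
            (fun j : Fin n => ((0 : H), (ψ j : H)))) := by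
    intro m n φ ψ
    unfold CARWick.GG
    rw [List.ofFn_add, List.prod_append]
    have e1 : (fun i : Fin m => CARWick.cOp a
        (Fin.append (fun i : Fin m => ((φ i.rev : H), (0 : H)))
          (fun j : Fin n => ((0 : H), (ψ j : H))) (Fin.castAdd n i)))
        = fun i : Fin m => a (φ i.rev) := funext fun i => by
      rw [Fin.append_left]; exact CARWick.cOp_pair_left a _
    have e2 : (fun j : Fin n => CARWick.cOp a
        (Fin.append (fun i : Fin m => ((φ i.rev : H), (0 : H)))
          (fun j : Fin n => ((0 : H), (ψ j : H))) (Fin.natAdd m j)))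
        = fun j : Fin n => adjoint (a (ψ j)) := funext fun j => by
      rw [Fin.append_right]; exact CARWick.cOp_pair_right a _
    rw [← e1, ← e2]
    rfl
  have hvlt : ∀ (m n : ℕ) (φ : Fin m → H) (ψ : Fin n → H) (x : Fin (m + n))
      (h : (x : ℕ) < m),
      Fin.append (fun i : Fin m => ((φ i.rev : H), (0 : H)))
        (fun j : Fin n => ((0 : H), (ψ j : H))) x = (φ (Fin.rev ⟨(x : ℕ), h⟩), 0) := by
    intro m n φ ψ x h
    have hx : x = Fin.castAdd n ⟨(x : ℕ), h⟩ := Fin.ext rfl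
    conv_lhs => rw [hx]
    rw [Fin.append_left]
  have hvge : ∀ (m n : ℕ) (φ : Fin m → H) (ψ : Fin n → H) (x : Fin (m + n))
      (h : m ≤ (x : ℕ)),
      Fin.append (fun i : Fin m => ((φ i.rev : H), (0 : H)))
        (fun j : Fin n => ((0 : H), (ψ j : H))) x
        = (0, ψ ⟨(x : ℕ) - m, by have := x.isLt; omega⟩) := by
    intro m n φ ψ x h
    have hx : x = Fin.natAdd m ⟨(x : ℕ) - m, by have := x.isLt; omega⟩ := by
      apply Fin.ext
      simp only [Fin.coe_natAdd]
      omega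
    conv_lhs => rw [hx]
    rw [Fin.append_right]
  -- vanishing of non-crossing terms
  have badzero : ∀ (m n : ℕ) (φ : Fin m → H) (ψ : Fin n → H) (σ : Equiv.Perm (Fin (m + n))),
      (∀ x, σ (σ x) = x) → (∀ i, σ i ≠ i) →
      ¬ (∀ i, i < σ i → ((i : ℕ) < m ∧ m ≤ (σ i : ℕ))) →
      (-1 : ℂ) ^ crossingNumber σ *
        ∏ i ∈ univ.filter (fun i => i < σ i),
          CARWick.W2 a τ
            (Fin.append (fun i : Fin m => ((φ i.rev : H), (0 : H)))
              (fun j : Fin n => ((0 : H), (ψ j : H))) i)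
            (Fin.append (fun i : Fin m => ((φ i.rev : H), (0 : H)))
              (fun j : Fin n => ((0 : H), (ψ j : H))) (σ i)) = 0 := by
    intro m n φ ψ σ hσσ hfix hnAC
    push_neg at hnAC
    obtain ⟨i, hilt, hbad⟩ := hnAC
    apply mul_eq_zero_of_right
    refine Finset.prod_eq_zero (Finset.mem_filter.mpr ⟨Finset.mem_univ i, hilt⟩) ?_
    have hvi : (i : ℕ) < (σ i : ℕ) := hilt
    by_cases hc : (i : ℕ) < m
    · have hσm : (σ i : ℕ) < m := by
        rcases Nat.lt_or_ge (σ i : ℕ) m with h | h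
        · exact h
        · exact absurd (hbad hc) (by omega)
      rw [hvlt m n φ ψ i hc, hvlt m n φ ψ (σ i) hσm]
      unfold CARWick.W2
      rw [CARWick.cOp_pair_left, CARWick.cOp_pair_left]
      exact (hPQ _ _).1
    · have h1 : m ≤ (i : ℕ) := Nat.le_of_not_lt hc
      have h2 : m ≤ (σ i : ℕ) := by omega
      rw [hvge m n φ ψ i h1, hvge m n φ ψ (σ i) h2]
      unfold CARWick.W2
      rw [CARWick.cOp_pair_right, CARWick.cOp_pair_right]
      exact (hPQ _ _).2
  constructor
  · -- unequal numbers of creation/annihilation operators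
    intro m n hmn1 hmn φ ψ
    rw [hGGprod m n φ ψ]
    rcases Nat.even_or_odd (m + n) with he | ho
    · obtain ⟨p, hp⟩ := he
      rw [wick_even (m + n) p (by omega) (by omega) _]
      unfold CARWick.WK
      apply Finset.sum_eq_zero
      intro σ hσ
      obtain ⟨hinv, hfix⟩ := (Finset.mem_filter.mp hσ).2
      exact badzero m n φ ψ σ (CARWick.sq_apply hinv) hfix
        (fun hAC => hmn (CARWick.balance σ (CARWick.sq_apply hinv) hfix hAC))
    · obtain ⟨k, hk⟩ := ho
      rw [wick_odd (m + n) k hk _]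
  · -- equal numbers: determinant formula
    intro n hn φ ψ
    rw [hGGprod n n φ ψ]
    rw [wick_even (n + n) n (by omega) hn _]
    unfold CARWick.WK
    set v : Fin (n + n) → H × H := Fin.append (fun i : Fin n => ((φ i.rev : H), (0 : H)))
      (fun j : Fin n => ((0 : H), (ψ j : H))) with hv
    set M : Matrix (Fin n) (Fin n) ℂ :=
      Matrix.of (fun i j : Fin n => τ (a (φ i) * adjoint (a (ψ j)))) with hM
    have hne : ∀ σ ∈ (univ.filter
        (fun σ : Equiv.Perm (Fin (n + n)) => σ * σ = 1 ∧ ∀ i, σ i ≠ i)),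
        ((-1 : ℂ) ^ crossingNumber σ *
          ∏ i ∈ univ.filter (fun i => i < σ i), CARWick.W2 a τ (v i) (v (σ i))) ≠ 0 →
        (∀ i : Fin (n + n), i < σ i → ((i : ℕ) < n ∧ n ≤ (σ i : ℕ))) := by
      intro σ hσ hne0
      by_contra hnAC
      obtain ⟨hinv, hfix⟩ := (Finset.mem_filter.mp hσ).2
      exact hne0 (badzero n n φ ψ σ (CARWick.sq_apply hinv) hfix hnAC)
    rw [← Finset.sum_filter_of_ne hne]
    have himg : (univ.filter
        (fun σ : Equiv.Perm (Fin (n + n)) => σ * σ = 1 ∧ ∀ i, σ i ≠ i)).filter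
        (fun σ => ∀ i : Fin (n + n), i < σ i → ((i : ℕ) < n ∧ n ≤ (σ i : ℕ)))
        = Finset.image CARWick.iota Finset.univ := by
      apply Finset.ext
      intro σ
      simp only [Finset.mem_filter, Finset.mem_univ, true_and, Finset.mem_image]
      constructor
      · rintro ⟨⟨hinv, hfix⟩, hac⟩
        obtain ⟨π, hπ⟩ := CARWick.iota_surj σ (CARWick.sq_apply hinv) hfix hac
        exact ⟨π, hπ⟩
      · rintro ⟨π, rfl⟩
        refine ⟨⟨CARWick.iota_sq π, CARWick.iota_fixfree π⟩, ?_⟩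
        intro i hi
        rcases CARWick.fin_sum_cases i with ⟨i', rfl⟩ | ⟨j, rfl⟩
        · rw [CARWick.iota_castAdd]
          constructor
          · simpa using i'.isLt
          · simp
        · exfalso
          rw [CARWick.iota_natAdd] at hi
          rw [Fin.lt_def] at hi
          simp only [Fin.coe_natAdd, Fin.coe_castAdd] at hi
          have := (π.symm j).isLt
          omega
    rw [himg, Finset.sum_image (fun π _ π' _ h => CARWick.iota_inj h)]
    have hcastinj : ∀ (i : Fin n), ∀ _ : i ∈ (Finset.univ : Finset (Fin n)),
        ∀ (i' : Fin n), ∀ _ : i' ∈ (Finset.univ : Finset (Fin n)),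
        Fin.castAdd n i = Fin.castAdd n i' → i = i' := by
      intro i _ i' _ h
      apply Fin.ext
      have := congrArg Fin.val h
      simpa using this
    have hterm : ∀ π : Equiv.Perm (Fin n),
        (-1 : ℂ) ^ crossingNumber (CARWick.iota π) *
          ∏ i ∈ univ.filter (fun i => i < CARWick.iota π i),
            CARWick.W2 a τ (v i) (v (CARWick.iota π i))
        = (-1 : ℂ) ^ CARWick.nonInv π * ∏ i : Fin n, M (Fin.rev i) (π i) := by
      intro π
      rw [CARWick.crossing_iota, CARWick.iota_filter_lt]
      congr 1
      have hset : univ.filter (fun x : Fin (n + n) => (x : ℕ) < n)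
          = Finset.image (Fin.castAdd n) Finset.univ := by
        apply Finset.ext
        intro x
        simp only [Finset.mem_filter, Finset.mem_univ, true_and, Finset.mem_image]
        constructor
        · intro h; exact ⟨⟨(x : ℕ), h⟩, Fin.ext rfl⟩
        · rintro ⟨i, rfl⟩; simpa using i.isLt
      rw [hset, Finset.prod_image hcastinj]
      refine Finset.prod_congr rfl ?_
      intro i _
      rw [CARWick.iota_castAdd]
      have h1 : v (Fin.castAdd n i) = (φ i.rev, 0) := by
        rw [hv, Fin.append_left]
      have h2 : v (Fin.natAdd n (π i)) = (0, ψ (π i)) := by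
        rw [hv, Fin.append_right]
      rw [h1, h2]
      unfold CARWick.W2
      rw [CARWick.cOp_pair_left, CARWick.cOp_pair_right, hM]
      rfl
    rw [Finset.sum_congr rfl (fun π _ => hterm π)]
    have hdet : Matrix.det M = ∑ ρ : Equiv.Perm (Fin n),
        ((Equiv.Perm.sign ρ : ℤ) : ℂ) * ∏ k, M k (ρ k) := by
      rw [← Matrix.det_transpose, Matrix.det_apply']
      simp only [Matrix.transpose_apply]
    rw [hdet]
    rw [← Equiv.sum_comp (Equiv.mulRight Fin.revPerm)
      (fun π => (-1 : ℂ) ^ CARWick.nonInv π * ∏ i : Fin n, M (Fin.rev i) (π i))]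
    refine Finset.sum_congr rfl ?_
    intro ρ _
    simp only [Equiv.coe_mulRight]
    rw [CARWick.nonInv_rev, ← CARWick.sign_eq_pow_invCount]
    congr 1
    rw [← Equiv.prod_comp Fin.revPerm (fun k => M k (ρ k))]
    refine Finset.prod_congr rfl ?_
    intro i _
    simp [Equiv.Perm.mul_apply, Fin.revPerm_apply]
end
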